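/- arXiv:1708.02345 — 10 statements merged into one kernel-verified Lean document; each statement's English description precedes it below -/
import Mathlib

section
/- For all positive real numbers a and b, (1 + (ln a - ln b)²/8) · √(ab) ≤ (a + b)/2. -/
lemma cosh_ge (x : ℝ) : 1 + x ^ 2 / 2 ≤ Real.cosh x := by
  have h1 : Real.cosh x = 1 + 2 * Real.sinh (x / 2) ^ 2 := by
    have hc := Real.cosh_two_mul (x / 2)
    rw [show 2 * (x / 2) = x by ring] at hc
    have := Real.cosh_sq (x / 2)
    linarith
  have h3 : (x / 2) ^ 2 ≤ Real.sinh (x / 2) ^ 2 := by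
    have := Real.self_le_sinh_iff.mpr (abs_nonneg (x / 2))
    rw [← Real.abs_sinh] at this
    calc (x / 2) ^ 2 = |x / 2| ^ 2 := (sq_abs _).symm
      _ ≤ |Real.sinh (x / 2)| ^ 2 := by
          apply pow_le_pow_left₀ (abs_nonneg _) this
      _ = Real.sinh (x / 2) ^ 2 := sq_abs _
  nlinarith

theorem refined_am_gm (a b : ℝ) (ha : 0 < a) (hb : 0 < b) :
    (1 + (Real.log a - Real.log b) ^ 2 / 8) * Real.sqrt (a * b) ≤ (a + b) / 2 := by
  set t := (Real.log a - Real.log b) / 2 with ht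
  have hsa : Real.exp (Real.log a / 2) = Real.sqrt a := by
    rw [Real.exp_half, Real.exp_log ha]
  have hsb : Real.exp (Real.log b / 2) = Real.sqrt b := by
    rw [Real.exp_half, Real.exp_log hb]
  have hab : Real.sqrt (a * b) = Real.sqrt a * Real.sqrt b := Real.sqrt_mul ha.le b
  have hkey : (a + b) / 2 = Real.cosh t * Real.sqrt (a * b) := by
    rw [Real.cosh_eq, hab]
    have h1 : Real.exp t * (Real.sqrt a * Real.sqrt b) = a := by
      have : Real.exp t * Real.exp (Real.log b / 2) = Real.exp (Real.log a / 2) := by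
        rw [← Real.exp_add]; congr 1; rw [ht]; ring
      rw [← hsb, ← hsa, mul_comm (Real.exp (Real.log a / 2)), ← mul_assoc, this, hsa,
        Real.mul_self_sqrt ha.le]
    have h2 : Real.exp (-t) * (Real.sqrt a * Real.sqrt b) = b := by
      have : Real.exp (-t) * Real.exp (Real.log a / 2) = Real.exp (Real.log b / 2) := by
        rw [← Real.exp_add]; congr 1; rw [ht]; ring
      rw [← hsb, ← hsa, ← mul_assoc, this, hsb, Real.mul_self_sqrt hb.le]
    nlinarith
  rw [hkey]
  have hc : 1 + (Real.log a - Real.log b) ^ 2 / 8 ≤ Real.cosh t := by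
    have := cosh_ge t
    rw [ht] at this ⊢
    nlinarith
  exact mul_le_mul_of_nonneg_right hc (Real.sqrt_nonneg _)
end

section
/- Let A be a nonzero bounded linear operator on a complex Hilbert space. Then ‖A‖·(1 - (1/2)·‖I - A/‖A‖‖²) ≤ ω(A), where ω(A) = sup{|⟨Ax, x⟩| : ‖x‖ = 1} is the numerical radius. -/
open scoped InnerProductSpace

noncomputable def numRadius {H : Type*} [NormedAddCommGroup H] [InnerProductSpace ℂ H]
    (A : H →L[ℂ] H) : ℝ :=
  ⨆ x : {x : H // ‖x‖ = 1}, ‖⟪(x : H), A x⟫_ℂ‖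

theorem norm_lower_bound_numRadius {H : Type*} [NormedAddCommGroup H] [InnerProductSpace ℂ H]
    [CompleteSpace H] (A : H →L[ℂ] H) (hA : A ≠ 0) :
    ‖A‖ * (1 - (1 / 2) * ‖(1 : H →L[ℂ] H) - ‖A‖⁻¹ • A‖ ^ 2) ≤ numRadius A := by
  have ha : (0 : ℝ) < ‖A‖ := norm_pos_iff.mpr hA
  set B : H →L[ℂ] H := ‖A‖⁻¹ • A with hB
  have hBnorm : ‖B‖ = 1 := by
    rw [hB, norm_smul, norm_inv, norm_norm, inv_mul_cancel₀ ha.ne']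
  set c : ℝ := ‖(1 : H →L[ℂ] H) - B‖ with hc
  have hbdd : BddAbove (Set.range fun x : {x : H // ‖x‖ = 1} => ‖⟪(x : H), A x⟫_ℂ‖) := by
    refine ⟨‖A‖, ?_⟩
    rintro _ ⟨x, rfl⟩
    calc ‖⟪(x : H), A x⟫_ℂ‖ ≤ ‖(x : H)‖ * ‖A x‖ := norm_inner_le_norm _ _
      _ ≤ ‖(x : H)‖ * (‖A‖ * ‖(x : H)‖) := by
          gcongr; exact A.le_opNorm _
      _ = ‖A‖ := by rw [x.2]; ring
  -- key pointwise bound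
  have key : ∀ u : H, ‖u‖ = 1 → ‖A‖ * ((1 + ‖B u‖ ^ 2 - c ^ 2) / 2) ≤ numRadius A := by
    intro u hu
    have h1 : ‖⟪u, A u⟫_ℂ‖ ≤ numRadius A :=
      le_ciSup hbdd (⟨u, hu⟩ : {x : H // ‖x‖ = 1})
    have h2 : Complex.re ⟪u, A u⟫_ℂ ≤ ‖⟪u, A u⟫_ℂ‖ := by exact Complex.re_le_norm _
    have hAB : A u = ‖A‖ • B u := by
      rw [hB, ContinuousLinearMap.smul_apply, smul_smul, mul_inv_cancel₀ ha.ne', one_smul]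
    have h3 : Complex.re ⟪u, A u⟫_ℂ = ‖A‖ * Complex.re ⟪u, B u⟫_ℂ := by
      rw [hAB, RCLike.real_smul_eq_coe_smul (K := ℂ), inner_smul_right]
      simp [Complex.mul_re]
    have h4 : ‖u - B u‖ ^ 2 = ‖u‖ ^ 2 - 2 * Complex.re ⟪u, B u⟫_ℂ + ‖B u‖ ^ 2 :=
      @norm_sub_sq ℂ _ _ _ _ u (B u)
    have h5 : ‖u - B u‖ ≤ c := by
      have := ((1 : H →L[ℂ] H) - B).le_opNorm u
      simpa [hu] using this
    have h6 : ‖u - B u‖ ^ 2 ≤ c ^ 2 := by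
      have h0 : (0 : ℝ) ≤ ‖u - B u‖ := norm_nonneg _
      nlinarith
    have h7 : (1 + ‖B u‖ ^ 2 - c ^ 2) / 2 ≤ Complex.re ⟪u, B u⟫_ℂ := by
      rw [hu] at h4; nlinarith
    calc ‖A‖ * ((1 + ‖B u‖ ^ 2 - c ^ 2) / 2) ≤ ‖A‖ * Complex.re ⟪u, B u⟫_ℂ := by gcongr
      _ = Complex.re ⟪u, A u⟫_ℂ := h3.symm
      _ ≤ ‖⟪u, A u⟫_ℂ‖ := h2
      _ ≤ numRadius A := h1
  refine le_of_forall_pos_le_add fun ε hε => ?_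
  set δ : ℝ := min 1 (ε / ‖A‖) with hδ
  have hδpos : 0 < δ := lt_min one_pos (div_pos hε ha)
  have hδ1 : δ ≤ 1 := min_le_left _ _
  have hr : 1 - δ < ‖B‖ := by rw [hBnorm]; linarith
  obtain ⟨x, hx1, hx2⟩ := B.exists_lt_apply_of_lt_opNorm hr
  have hxne : x ≠ 0 := by
    rintro rfl
    simp only [map_zero, norm_zero] at hx2
    linarith
  have hxpos : 0 < ‖x‖ := norm_pos_iff.mpr hxne
  set u : H := ‖x‖⁻¹ • x with hu
  have hunorm : ‖u‖ = 1 := by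
    rw [hu, norm_smul, norm_inv, norm_norm, inv_mul_cancel₀ hxpos.ne']
  have hBu : 1 - δ < ‖B u‖ := by
    have : ‖B u‖ = ‖x‖⁻¹ * ‖B x‖ := by
      rw [hu, RCLike.real_smul_eq_coe_smul (K := ℂ) ‖x‖⁻¹ x, map_smul, norm_smul]
      simp
    rw [this]
    have hinv : 1 < ‖x‖⁻¹ := (one_lt_inv₀ hxpos).mpr hx1
    calc 1 - δ < ‖B x‖ := hx2
      _ = 1 * ‖B x‖ := (one_mul _).symm
      _ ≤ ‖x‖⁻¹ * ‖B x‖ := by gcongr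
  have hBu1 : ‖B u‖ ≤ 1 := by
    have := B.le_opNorm u
    rwa [hBnorm, hunorm, one_mul] at this
  have hkey := key u hunorm
  have hδε : ‖A‖ * δ ≤ ε := by
    have : δ ≤ ε / ‖A‖ := min_le_right _ _
    calc ‖A‖ * δ ≤ ‖A‖ * (ε / ‖A‖) := by gcongr
      _ = ε := by field_simp
  have hsq : 1 - ‖B u‖ ^ 2 ≤ 2 * δ := by nlinarith
  nlinarith
end

section
/- Let x, y, z be vectors in a complex inner product space with z ≠ 0. Then |⟨x, y⟩ - (⟨x, z⟩/‖z‖²)·⟨z, y⟩|² + (|⟨x, z⟩|²/‖z‖²)·‖y‖² ≤ ‖x‖²·‖y‖². -/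
open scoped InnerProductSpace
open ComplexConjugate

theorem inner_three_vector_ineq {H : Type*} [NormedAddCommGroup H] [InnerProductSpace ℂ H]
    (x y z : H) (hz : z ≠ 0) :
    ‖⟪x, y⟫_ℂ - (⟪x, z⟫_ℂ / (‖z‖ : ℂ) ^ 2) * ⟪z, y⟫_ℂ‖ ^ 2
      + (‖⟪x, z⟫_ℂ‖ ^ 2 / ‖z‖ ^ 2) * ‖y‖ ^ 2 ≤ ‖x‖ ^ 2 * ‖y‖ ^ 2 := by
  have hzr : (‖z‖ : ℝ) ≠ 0 := norm_ne_zero_iff.mpr hz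
  have hz2 : ((‖z‖ : ℂ)) ^ 2 ≠ 0 := by
    simpa using pow_ne_zero 2 (by exact_mod_cast hzr : ((‖z‖ : ℂ)) ≠ 0)
  set c : ℂ := ⟪z, x⟫_ℂ / (‖z‖ : ℂ) ^ 2 with hc
  set u : H := x - c • z with hu
  have hconj : conj c = ⟪x, z⟫_ℂ / (‖z‖ : ℂ) ^ 2 := by
    simp [hc, map_div₀, inner_conj_symm]
  have hiu : ⟪u, y⟫_ℂ = ⟪x, y⟫_ℂ - (⟪x, z⟫_ℂ / (‖z‖ : ℂ) ^ 2) * ⟪z, y⟫_ℂ := by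
    simp [hu, inner_sub_left, inner_smul_left, hconj]
    ring
  have hzz : ⟪z, z⟫_ℂ = (‖z‖ : ℂ) ^ 2 := by
    rw [inner_self_eq_norm_sq_to_K]; norm_cast
  have hxz : ⟪x, z⟫_ℂ = conj ⟪z, x⟫_ℂ := (inner_conj_symm _ _).symm
  have hnu : ‖u‖ ^ 2 = ‖x‖ ^ 2 - ‖⟪x, z⟫_ℂ‖ ^ 2 / ‖z‖ ^ 2 := by
    have h1 : (‖u‖ : ℝ) ^ 2 = Complex.re ⟪u, u⟫_ℂ := by
      rw [← inner_self_eq_norm_sq (𝕜 := ℂ)]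
      rfl
    have h2 : ⟪u, u⟫_ℂ = ⟪x, x⟫_ℂ - conj ⟪z, x⟫_ℂ * ⟪z, x⟫_ℂ / (‖z‖ : ℂ) ^ 2 := by
      simp only [hu, inner_sub_left, inner_sub_right, inner_smul_left, inner_smul_right, hzz,
        hconj, hxz, hc]
      field_simp
      simp only [map_div₀, map_pow, Complex.conj_ofReal]
      have hzc : (‖z‖ : ℂ) ≠ 0 := by exact_mod_cast hzr
      field_simp
      ring
    have hxx : ⟪x, x⟫_ℂ = ((‖x‖ : ℂ)) ^ 2 := by rw [inner_self_eq_norm_sq_to_K]; norm_cast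
    have h3 : conj ⟪z, x⟫_ℂ * ⟪z, x⟫_ℂ = ((‖⟪z, x⟫_ℂ‖ : ℂ)) ^ 2 := by
      rw [Complex.conj_mul']
    rw [h1, h2, hxx, h3, hxz]
    push_cast
    simp [Complex.div_re, Complex.normSq, pow_two]
    ring_nf
    rw [hxz, Complex.norm_conj]
    field_simp
  have hcs : ‖⟪u, y⟫_ℂ‖ ^ 2 ≤ ‖u‖ ^ 2 * ‖y‖ ^ 2 := by
    have := norm_inner_le_norm (𝕜 := ℂ) u y
    calc ‖⟪u, y⟫_ℂ‖ ^ 2 ≤ (‖u‖ * ‖y‖) ^ 2 := by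
          apply pow_le_pow_left₀ (norm_nonneg _) this
      _ = ‖u‖ ^ 2 * ‖y‖ ^ 2 := by ring
  rw [hiu] at hcs
  rw [hnu] at hcs
  nlinarith [sq_nonneg ‖y‖, norm_nonneg (⟪x,z⟫_ℂ)]
end

section
/- Let A be a bounded linear operator on a complex Hilbert space and x a unit vector with A*x ≠ 0. Then (|⟨A²x, x⟩ - ⟨Ax, x⟩²| / ‖A*x‖)² + |⟨Ax, x⟩|² ≤ ‖Ax‖². -/
open scoped InnerProductSpace

theorem op_quadratic_ineq {H : Type*} [NormedAddCommGroup H] [InnerProductSpace ℂ H]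
    [CompleteSpace H] (A : H →L[ℂ] H) (x : H) (hx : ‖x‖ = 1)
    (hAx : ContinuousLinearMap.adjoint A x ≠ 0) :
    (‖⟪x, A (A x)⟫_ℂ - ⟪x, A x⟫_ℂ ^ 2‖ / ‖ContinuousLinearMap.adjoint A x‖) ^ 2
      + ‖⟪x, A x⟫_ℂ‖ ^ 2 ≤ ‖A x‖ ^ 2 := by
  set a := ContinuousLinearMap.adjoint A x with ha
  set α := ⟪x, A x⟫_ℂ with hα
  set y := A x - α • x with hy
  have hxx : ⟪x, x⟫_ℂ = 1 := by
    rw [inner_self_eq_norm_sq_to_K, hx]; norm_num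
  have hxy : ⟪x, y⟫_ℂ = 0 := by
    simp [hy, inner_sub_right, inner_smul_right, hxx, hx, ← hα]
  have hax : ⟪a, x⟫_ℂ = α := by
    rw [ha, ContinuousLinearMap.adjoint_inner_left, hα]
  have key : ⟪x, A (A x)⟫_ℂ - α ^ 2 = ⟪a, y⟫_ℂ := by
    rw [hy, inner_sub_right, inner_smul_right, hax, ha,
      ContinuousLinearMap.adjoint_inner_left]
    ring
  have hnorm : ‖A x‖ ^ 2 = ‖α‖ ^ 2 + ‖y‖ ^ 2 := by
    have hAxeq : A x = α • x + y := by rw [hy]; abel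
    have horth : ⟪α • x, y⟫_ℂ = 0 := by
      rw [inner_smul_left, hxy, mul_zero]
    have h2 := norm_add_sq (𝕜 := ℂ) (α • x) y
    rw [← hAxeq, horth] at h2
    simp [h2, norm_smul, hx]
  have hapos : (0:ℝ) < ‖a‖ := norm_pos_iff.mpr hAx
  have hcs : ‖⟪a, y⟫_ℂ‖ ≤ ‖a‖ * ‖y‖ := norm_inner_le_norm a y
  have hdiv : ‖⟪x, A (A x)⟫_ℂ - α ^ 2‖ / ‖a‖ ≤ ‖y‖ := by
    rw [key, div_le_iff₀ hapos]
    linarith [hcs]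
  have hsq : (‖⟪x, A (A x)⟫_ℂ - α ^ 2‖ / ‖a‖) ^ 2 ≤ ‖y‖ ^ 2 := by
    apply sq_le_sq'
    · have : (0:ℝ) ≤ ‖⟪x, A (A x)⟫_ℂ - α ^ 2‖ / ‖a‖ := by positivity
      linarith [norm_nonneg y]
    · exact hdiv
  linarith
end

section
/- Let A be a bounded invertible operator on a complex Hilbert space. Then inf_{‖x‖=1} ξ(x)² + ω(A)² ≤ ‖A‖², where ξ(x) = |⟨A²x, x⟩ - ⟨Ax, x⟩²| / ‖A*x‖ and ω(A) is the numerical radius. -/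
open scoped InnerProductSpace

theorem key_pointwise {H : Type*} [NormedAddCommGroup H] [InnerProductSpace ℂ H]
    [CompleteSpace H] (A : H →L[ℂ] H) (x : H) (hx : ‖x‖ = 1) :
    (‖⟪x, A (A x)⟫_ℂ - ⟪x, A x⟫_ℂ ^ 2‖ / ‖ContinuousLinearMap.adjoint A x‖) ^ 2
      + ‖⟪x, A x⟫_ℂ‖ ^ 2 ≤ ‖A‖ ^ 2 := by
  set a : ℂ := ⟪x, A x⟫_ℂ with ha
  set b : H := A x - a • x with hb
  have hxb : ⟪x, b⟫_ℂ = 0 := by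
    simp [hb, ha, inner_sub_right, inner_smul_right, ← @inner_self_eq_norm_sq_to_K ℂ, hx,
      inner_self_eq_norm_sq_to_K, mul_comm]
  have hpyth : ‖A x‖ ^ 2 = ‖a‖ ^ 2 + ‖b‖ ^ 2 := by
    have h1 : A x = a • x + b := by simp [hb]
    have h2 : ⟪a • x, b⟫_ℂ = 0 := by rw [inner_smul_left, hxb, mul_zero]
    have := norm_add_sq_eq_norm_sq_add_norm_sq_of_inner_eq_zero (a • x) b h2
    rw [h1]
    have : ‖a • x‖ = ‖a‖ := by simp [norm_smul, hx]
    rw [show ‖a • x + b‖ ^ 2 = ‖a • x + b‖ * ‖a • x + b‖ by ring,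
      norm_add_sq_eq_norm_sq_add_norm_sq_of_inner_eq_zero (a • x) b h2, this]
    ring
  have hnum : ‖⟪x, A (A x)⟫_ℂ - a ^ 2‖ ≤ ‖ContinuousLinearMap.adjoint A x‖ * ‖b‖ := by
    have h1 : ⟪x, A (A x)⟫_ℂ = ⟪ContinuousLinearMap.adjoint A x, A x⟫_ℂ := by
      rw [ContinuousLinearMap.adjoint_inner_left]
    have h2 : a = ⟪ContinuousLinearMap.adjoint A x, x⟫_ℂ := by
      rw [ContinuousLinearMap.adjoint_inner_left]
    have h3 : ⟪x, A (A x)⟫_ℂ - a ^ 2 = ⟪ContinuousLinearMap.adjoint A x, b⟫_ℂ := by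
      rw [hb, inner_sub_right, inner_smul_right, h1, ← h2]
      ring
    rw [h3]
    exact norm_inner_le_norm _ _
  have hdiv : ‖⟪x, A (A x)⟫_ℂ - a ^ 2‖ / ‖ContinuousLinearMap.adjoint A x‖ ≤ ‖b‖ := by
    rcases eq_or_lt_of_le (norm_nonneg (ContinuousLinearMap.adjoint A x)) with h | h
    · rw [← h, div_zero]; exact norm_nonneg _
    · rw [div_le_iff₀ h]
      calc _ ≤ ‖ContinuousLinearMap.adjoint A x‖ * ‖b‖ := hnum
        _ = ‖b‖ * ‖ContinuousLinearMap.adjoint A x‖ := by ring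
  have hAx : ‖A x‖ ≤ ‖A‖ := by
    have := A.le_opNorm x
    rwa [hx, mul_one] at this
  have hsq : (‖⟪x, A (A x)⟫_ℂ - a ^ 2‖ / ‖ContinuousLinearMap.adjoint A x‖) ^ 2 ≤ ‖b‖ ^ 2 := by
    apply pow_le_pow_left₀ (by positivity) hdiv
  have h2 : ‖A x‖ ^ 2 ≤ ‖A‖ ^ 2 := pow_le_pow_left₀ (norm_nonneg _) hAx 2
  nlinarith [norm_nonneg b]

theorem numRadius_norm_ineq {H : Type*} [NormedAddCommGroup H] [InnerProductSpace ℂ H]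
    [CompleteSpace H] (A : H →L[ℂ] H) (hA : IsUnit A) :
    (⨅ x : {x : H // ‖x‖ = 1},
        (‖⟪(x : H), A (A x)⟫_ℂ - ⟪(x : H), A x⟫_ℂ ^ 2‖ /
          ‖ContinuousLinearMap.adjoint A x‖) ^ 2)
      + numRadius A ^ 2 ≤ ‖A‖ ^ 2 := by
  by_cases hne : Nonempty {x : H // ‖x‖ = 1}
  · set ξ : {x : H // ‖x‖ = 1} → ℝ := fun x =>
      (‖⟪(x : H), A (A x)⟫_ℂ - ⟪(x : H), A x⟫_ℂ ^ 2‖ /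
        ‖ContinuousLinearMap.adjoint A x‖) ^ 2 with hξ
    set w : {x : H // ‖x‖ = 1} → ℝ := fun x => ‖⟪(x : H), A x⟫_ℂ‖ with hw
    have hkey : ∀ x, ξ x + w x ^ 2 ≤ ‖A‖ ^ 2 := fun x => key_pointwise A x x.2
    have hbb : BddBelow (Set.range ξ) := ⟨0, by rintro _ ⟨x, rfl⟩; positivity⟩
    have hba : BddAbove (Set.range w) := by
      refine ⟨‖A‖, ?_⟩
      rintro _ ⟨x, rfl⟩
      calc w x ≤ ‖(x : H)‖ * ‖A x‖ := norm_inner_le_norm _ _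
        _ ≤ 1 * ‖A‖ := by
            rw [x.2]
            have := A.le_opNorm x
            rw [x.2, mul_one] at this
            simpa using this
        _ = ‖A‖ := one_mul _
    set I := ⨅ x, ξ x with hI
    have hIle : ∀ x, I ≤ ξ x := fun x => ciInf_le hbb x
    haveI := hne
    obtain ⟨x₀⟩ := id hne
    have hc : 0 ≤ ‖A‖ ^ 2 - I := by
      have := hIle x₀
      have h2 := hkey x₀
      nlinarith [sq_nonneg (w x₀)]
    have hwle : ∀ x, w x ≤ Real.sqrt (‖A‖ ^ 2 - I) := by
      intro x
      rw [show Real.sqrt (‖A‖ ^ 2 - I) = Real.sqrt (‖A‖ ^ 2 - I) from rfl]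
      have h1 : w x ^ 2 ≤ ‖A‖ ^ 2 - I := by
        have := hkey x; have := hIle x; linarith
      have := Real.sqrt_le_sqrt h1
      rwa [Real.sqrt_sq (norm_nonneg _)] at this
    have hnr : numRadius A ≤ Real.sqrt (‖A‖ ^ 2 - I) := ciSup_le hwle
    have hnr0 : 0 ≤ numRadius A :=
      le_trans (norm_nonneg _) (le_ciSup hba x₀)
    have : numRadius A ^ 2 ≤ ‖A‖ ^ 2 - I := by
      calc numRadius A ^ 2 ≤ Real.sqrt (‖A‖ ^ 2 - I) ^ 2 :=
            pow_le_pow_left₀ hnr0 hnr 2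
        _ = ‖A‖ ^ 2 - I := Real.sq_sqrt hc
    linarith
  · rw [not_nonempty_iff] at hne
    rw [iInf_of_isEmpty, Real.sInf_empty]
    rw [numRadius, Real.iSup_of_isEmpty]
    simpa using sq_nonneg ‖A‖
end

section
/- Mixed Schwarz inequality: for any bounded linear operator A on a complex Hilbert space and all vectors x, y, |⟨Ax, y⟩| ≤ ⟨|A|x, x⟩^{1/2} · ⟨|A*|y, y⟩^{1/2}. -/
open scoped InnerProductSpace
open ContinuousLinearMap Polynomial

set_option synthInstance.maxHeartbeats 1000000

private lemma pow_intertwine' {B : Type*} [Ring B] {u a b : B} (h : u * a = b * u) (n : ℕ) :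
    u * a ^ n = b ^ n * u := by
  induction n with
  | zero => simp
  | succ n ih => rw [pow_succ, pow_succ, ← mul_assoc, ih, mul_assoc, h, ← mul_assoc]

private lemma aeval_intertwine' {B : Type*} [Ring B] [Algebra ℝ B] {u a b : B}
    (h : u * a = b * u) (p : ℝ[X]) :
    u * Polynomial.aeval a p = Polynomial.aeval b p * u := by
  induction p using Polynomial.induction_on' with
  | add p q hp hq => rw [map_add, map_add, mul_add, add_mul, hp, hq]
  | monomial n r =>
      rw [Polynomial.aeval_monomial, Polynomial.aeval_monomial, ← mul_assoc,
        ← Algebra.commutes r u, mul_assoc, pow_intertwine' h, ← mul_assoc]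

private lemma cfc_intertwine {B : Type*} [CStarAlgebra B] {u a b : B}
    (ha : IsSelfAdjoint a) (hb : IsSelfAdjoint b) (h : u * a = b * u)
    {f : ℝ → ℝ} (hf : Continuous f) :
    u * cfc f a = cfc f b * u := by
  nontriviality B
  set M : ℝ := max ‖a‖ ‖b‖ with hM
  have hspa : spectrum ℝ a ⊆ Set.Icc (-M) M := fun t ht => by
    have h1 : |t| ≤ ‖a‖ := by
      simpa [Real.norm_eq_abs] using spectrum.norm_le_norm_of_mem ht
    have := abs_le.mp h1
    constructor
    · linarith [le_max_left ‖a‖ ‖b‖]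
    · linarith [le_max_left ‖a‖ ‖b‖]
  have hspb : spectrum ℝ b ⊆ Set.Icc (-M) M := fun t ht => by
    have h1 : |t| ≤ ‖b‖ := by
      simpa [Real.norm_eq_abs] using spectrum.norm_le_norm_of_mem ht
    have := abs_le.mp h1
    constructor
    · linarith [le_max_right ‖a‖ ‖b‖]
    · linarith [le_max_right ‖a‖ ‖b‖]
  rw [← sub_eq_zero, ← norm_le_zero_iff]
  refine le_of_forall_pos_le_add fun ε hε => ?_
  have hd : (0:ℝ) < ε / (2 * (‖u‖ + 1)) := by positivity
  obtain ⟨q, hq⟩ := exists_polynomial_near_of_continuousOn (-M) M f hf.continuousOn _ hd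
  have key : u * Polynomial.aeval a q = Polynomial.aeval b q * u := aeval_intertwine' h q
  have e1 : ‖cfc f a - cfc q.eval a‖ ≤ ε / (2 * (‖u‖ + 1)) := by
    rw [← cfc_sub f q.eval a (hf.continuousOn) (q.continuous_aeval.continuousOn)]
    refine norm_cfc_le (le_of_lt hd) fun t ht => ?_
    have := hq t (hspa ht)
    rw [Real.norm_eq_abs, abs_sub_comm]
    exact this.le
  have e2 : ‖cfc q.eval b - cfc f b‖ ≤ ε / (2 * (‖u‖ + 1)) := by
    rw [← cfc_sub q.eval f b (q.continuous_aeval.continuousOn) (hf.continuousOn)]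
    refine norm_cfc_le (le_of_lt hd) fun t ht => ?_
    have := hq t (hspb ht)
    rw [Real.norm_eq_abs]
    exact this.le
  have split : u * cfc f a - cfc f b * u
      = u * (cfc f a - cfc q.eval a) + (cfc q.eval b - cfc f b) * u := by
    rw [mul_sub, sub_mul, cfc_polynomial q a ha, cfc_polynomial q b hb, key]
    abel
  have h2 : (0:ℝ) < 2 * (‖u‖ + 1) := by positivity
  have hc : ε / (2 * (‖u‖ + 1)) * (2 * (‖u‖ + 1)) = ε := div_mul_cancel₀ _ (ne_of_gt h2)
  calc ‖u * cfc f a - cfc f b * u‖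
      ≤ ‖u * (cfc f a - cfc q.eval a)‖ + ‖(cfc q.eval b - cfc f b) * u‖ := by
        rw [split]; exact norm_add_le _ _
    _ ≤ ‖u‖ * (ε / (2 * (‖u‖ + 1))) + (ε / (2 * (‖u‖ + 1))) * ‖u‖ :=
        add_le_add ((norm_mul_le _ _).trans (mul_le_mul_of_nonneg_left e1 (norm_nonneg u)))
          ((norm_mul_le _ _).trans (mul_le_mul_of_nonneg_right e2 (norm_nonneg u)))
    _ ≤ 0 + ε := by nlinarith [norm_nonneg u, hd]

private lemma sqrt_as_real_cfc {B : Type*} [CStarAlgebra B] [PartialOrder B] [StarOrderedRing B]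
    (a : B) (ha : 0 ≤ a) : CFC.sqrt a = cfc Real.sqrt a := by
  rw [CFC.sqrt_eq_cfc, cfc_nnreal_eq_real _ a ha]
  exact cfc_congr fun x _ => (Real.sqrt.eq_1 x).symm

set_option maxHeartbeats 2000000 in
theorem mixed_schwarz {H : Type*} [NormedAddCommGroup H] [InnerProductSpace ℂ H]
    [CompleteSpace H] (A : H →L[ℂ] H) (x y : H) :
    ‖⟪y, A x⟫_ℂ‖ ≤
      Real.sqrt (⟪x, CFC.sqrt (adjoint A * A) x⟫_ℂ).re *
        Real.sqrt (⟪y, CFC.sqrt (A * adjoint A) y⟫_ℂ).re := by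
  set a := adjoint A * A with ha_def
  set b := A * adjoint A with hb_def
  have ha : (0 : H →L[ℂ] H) ≤ a := by
    simpa [ha_def, star_eq_adjoint] using star_mul_self_nonneg A
  have hb : (0 : H →L[ℂ] H) ≤ b := by
    simpa [hb_def, star_eq_adjoint] using mul_star_self_nonneg A
  set S := CFC.sqrt a with hS_def
  set T := CFC.sqrt b with hT_def
  have hS : (0 : H →L[ℂ] H) ≤ S := CFC.sqrt_nonneg (a := a)
  have hT : (0 : H →L[ℂ] H) ≤ T := CFC.sqrt_nonneg (a := b)
  have hSsa : IsSelfAdjoint S := IsSelfAdjoint.of_nonneg hS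
  have hTsa : IsSelfAdjoint T := IsSelfAdjoint.of_nonneg hT
  have key : ∀ f : ℝ → ℝ, Continuous f → A * cfc f S = cfc f T * A := by
    intro f hf
    have hAS : A * S = T * A := by
      rw [hS_def, hT_def, sqrt_as_real_cfc a ha, sqrt_as_real_cfc b hb]
      exact cfc_intertwine (IsSelfAdjoint.of_nonneg ha) (IsSelfAdjoint.of_nonneg hb)
        (mul_assoc A (adjoint A) A).symm Real.continuous_sqrt
    exact cfc_intertwine hSsa hTsa hAS hf
  have hrx : 0 ≤ (⟪x, S x⟫_ℂ).re := by
    simpa using (Complex.le_def.mp (((nonneg_iff_isPositive S).mp hS).inner_nonneg_right x)).1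
  have hry : 0 ≤ (⟪y, T y⟫_ℂ).re := by
    simpa using (Complex.le_def.mp (((nonneg_iff_isPositive T).mp hT).inner_nonneg_right y)).1
  set rx := (⟪x, S x⟫_ℂ).re with hrx_def
  set ry := (⟪y, T y⟫_ℂ).re with hry_def
  suffices hsq : ‖⟪y, A x⟫_ℂ‖ ^ 2 ≤ rx * ry by
    have h1 : ‖⟪y, A x⟫_ℂ‖ = Real.sqrt (‖⟪y, A x⟫_ℂ‖ ^ 2) := (Real.sqrt_sq (norm_nonneg _)).symm
    rw [h1, ← Real.sqrt_mul hrx ry]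
    exact Real.sqrt_le_sqrt hsq
  have main : ∀ ε : ℝ, 0 < ε → ‖⟪y, A x⟫_ℂ‖ ^ 2 ≤ (rx + ε * ‖x‖ ^ 2) * ry := by
    intro ε hε
    set g : ℝ → ℝ := fun t => (Real.sqrt (|t| + ε))⁻¹ with hg_def
    set h : ℝ → ℝ := fun t => Real.sqrt (|t| + ε) with hh_def
    have hpos : ∀ t : ℝ, 0 < Real.sqrt (|t| + ε) := fun t =>
      Real.sqrt_pos.mpr (by positivity)
    have hhcont : Continuous h := Real.continuous_sqrt.comp (continuous_abs.add continuous_const)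
    have hgcont : Continuous g := hhcont.inv₀ fun t => (hpos t).ne'
    set G := cfc g S with hG_def
    set Hc := cfc h S with hHc_def
    have hGsa : IsSelfAdjoint G := cfc_predicate g S
    have hHsa : IsSelfAdjoint Hc := cfc_predicate h S
    have hGadj : adjoint G = G := by rw [← star_eq_adjoint]; exact hGsa
    have hHadj : adjoint Hc = Hc := by rw [← star_eq_adjoint]; exact hHsa
    have hGH : G * Hc = (1 : H →L[ℂ] H) := by
      rw [hG_def, hHc_def, ← cfc_mul g h S hgcont.continuousOn hhcont.continuousOn]
      have he : (fun t => g t * h t) = (1 : ℝ → ℝ) := by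
        funext t; exact inv_mul_cancel₀ (hpos t).ne'
      rw [he, cfc_one ℝ S]
    have hx_eq : G (Hc x) = x := by
      rw [← ContinuousLinearMap.mul_apply, hGH, ContinuousLinearMap.one_apply]
    set w := adjoint A y with hw_def
    have inner_eq : ⟪y, A x⟫_ℂ = ⟪G w, Hc x⟫_ℂ := by
      rw [← adjoint_inner_left A x y, ← hw_def]
      conv_lhs => rw [← hx_eq]
      rw [← adjoint_inner_left G (Hc x) w, hGadj]
    -- bound 1 : ‖Hc x‖^2 = rx + ε * ‖x‖^2
    have hHH : Hc * Hc = S + algebraMap ℝ (H →L[ℂ] H) ε := by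
      rw [hHc_def, ← cfc_mul h h S hhcont.continuousOn hhcont.continuousOn]
      have he : cfc (fun t => h t * h t) S = cfc (fun t : ℝ => id t + ε) S := by
        refine cfc_congr fun t ht => ?_
        have ht0 : 0 ≤ t := spectrum_nonneg_of_nonneg hS ht
        simp only [hh_def, id_eq]
        rw [Real.mul_self_sqrt (by positivity), abs_of_nonneg ht0]
      rw [he, cfc_add_const ε id S, cfc_id ℝ S]
    have bound1 : ‖Hc x‖ ^ 2 = rx + ε * ‖x‖ ^ 2 := by
      have h1 : (‖Hc x‖ : ℝ) ^ 2 = (⟪Hc x, Hc x⟫_ℂ).re := by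
        simpa using (inner_self_eq_norm_sq (𝕜 := ℂ) (Hc x)).symm
      have h2 : ⟪Hc x, Hc x⟫_ℂ = ⟪x, (Hc * Hc) x⟫_ℂ := by
        rw [ContinuousLinearMap.mul_apply, ← adjoint_inner_left Hc (Hc x) x, hHadj]
      rw [h1, h2, hHH]
      have h3 : (S + algebraMap ℝ (H →L[ℂ] H) ε) x = S x + (ε : ℂ) • x := by
        simp [ContinuousLinearMap.add_apply, Algebra.algebraMap_eq_smul_one]
      rw [h3, inner_add_right, inner_smul_right]
      have h4 : (⟪x, x⟫_ℂ).re = ‖x‖ ^ 2 := by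
        simpa using inner_self_eq_norm_sq (𝕜 := ℂ) x
      simp [Complex.add_re, Complex.mul_re, h4, hrx_def]
      left; rw [← Complex.ofReal_pow, Complex.ofReal_re]
    -- bound 2 : ‖G w‖^2 ≤ ry
    have hmul : A * (G * G) * adjoint A = cfc (fun t => g t * g t * t ^ 2) T := by
      have h1 : G * G = cfc (fun t => g t * g t) S := by
        rw [hG_def, ← cfc_mul g g S hgcont.continuousOn hgcont.continuousOn]
      have h2 : A * cfc (fun t => g t * g t) S = cfc (fun t => g t * g t) T * A :=
        key _ (hgcont.mul hgcont)
      have h3 : cfc (fun t : ℝ => t ^ 2) T = T ^ 2 := by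
        have := cfc_pow (id : ℝ → ℝ) 2 T
        simpa [cfc_id ℝ T] using this
      calc A * (G * G) * adjoint A
          = cfc (fun t => g t * g t) T * (A * adjoint A) := by
            rw [h1, mul_assoc, ← mul_assoc A _ (adjoint A), h2, mul_assoc]
        _ = cfc (fun t => g t * g t) T * T ^ 2 := by
            rw [← hb_def, ← CFC.sq_sqrt b hb, ← hT_def]
        _ = cfc (fun t => g t * g t) T * cfc (fun t : ℝ => t ^ 2) T := by rw [h3]
        _ = cfc (fun t => g t * g t * t ^ 2) T := by
            rw [← cfc_mul (fun t => g t * g t) (fun t : ℝ => t ^ 2) T (hgcont.mul hgcont).continuousOn (by fun_prop)]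
    have hmono : cfc (fun t => g t * g t * t ^ 2) T ≤ T := by
      conv_rhs => rw [← cfc_id ℝ T]
      refine cfc_mono fun t ht => ?_
      have ht0 : 0 ≤ t := spectrum_nonneg_of_nonneg hT ht
      have hgg : g t * g t = (|t| + ε)⁻¹ := by
        rw [hg_def]
        simp only
        rw [← mul_inv, Real.mul_self_sqrt (by positivity)]
      rw [hgg, abs_of_nonneg ht0, id_eq]
      rw [inv_mul_le_iff₀ (by positivity)]
      nlinarith
    have bound2 : ‖G w‖ ^ 2 ≤ ry := by
      have h1 : (‖G w‖ : ℝ) ^ 2 = (⟪G w, G w⟫_ℂ).re := by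
        simpa using (inner_self_eq_norm_sq (𝕜 := ℂ) (G w)).symm
      have h2 : ⟪G w, G w⟫_ℂ = ⟪y, (A * (G * G) * adjoint A) y⟫_ℂ := by
        have e1 : ⟪G w, G w⟫_ℂ = ⟪w, G (G w)⟫_ℂ := by
          rw [← adjoint_inner_left G (G w) w, hGadj]
        have e2 : ⟪w, G (G w)⟫_ℂ = ⟪y, A (G (G w))⟫_ℂ := by
          rw [hw_def, adjoint_inner_left A (G (G w)) y]
        rw [e1, e2]
        rfl
      rw [h1, h2, hmul]
      have hle := hmono
      rw [ContinuousLinearMap.le_def] at hle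
      have hpos2 := hle.inner_nonneg_right y
      simp only [reApplyInnerSelf, ContinuousLinearMap.sub_apply, inner_sub_right] at hpos2 ⊢
      have : 0 ≤ (⟪y, T y⟫_ℂ - ⟪y, (cfc (fun t => g t * g t * t ^ 2) T) y⟫_ℂ).re := by
        simpa [inner_sub_right] using (Complex.le_def.mp hpos2).1
      rw [Complex.sub_re] at this
      linarith
    calc ‖⟪y, A x⟫_ℂ‖ ^ 2 = ‖⟪G w, Hc x⟫_ℂ‖ ^ 2 := by rw [inner_eq]
      _ ≤ (‖G w‖ * ‖Hc x‖) ^ 2 := by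
          have := norm_inner_le_norm (𝕜 := ℂ) (G w) (Hc x)
          exact pow_le_pow_left₀ (norm_nonneg _) this 2
      _ = ‖G w‖ ^ 2 * ‖Hc x‖ ^ 2 := by ring
      _ ≤ ry * (rx + ε * ‖x‖ ^ 2) := by
          rw [bound1]
          exact mul_le_mul_of_nonneg_right bound2 (by positivity)
      _ = (rx + ε * ‖x‖ ^ 2) * ry := mul_comm _ _
  refine le_of_forall_pos_le_add fun δ hδ => ?_
  have hε : (0 : ℝ) < δ / (ry * ‖x‖ ^ 2 + 1) := by positivity
  have hmain := main _ hε
  have hb2 : δ / (ry * ‖x‖ ^ 2 + 1) * (ry * ‖x‖ ^ 2 + 1) = δ :=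
    div_mul_cancel₀ _ (by positivity)
  nlinarith [sq_nonneg ‖x‖, hry, hrx, hε.le]
end

section
/- If A and B are positive bounded operators on a complex Hilbert space and 0 ≤ r ≤ 1, then ‖A^r B^r‖ ≤ ‖AB‖^r. -/
open scoped InnerProductSpace
open ContinuousLinearMap

set_option synthInstance.maxHeartbeats 1000000
set_option maxHeartbeats 1000000

open scoped NNReal

section Helpers

variable {H : Type*} [NormedAddCommGroup H] [InnerProductSpace ℂ H] [CompleteSpace H]

private lemma cordes_rpow_mul_rpow (a : H →L[ℂ] H) (x y : ℝ) (hx : 0 ≤ x) (hy : 0 ≤ y)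
    (ha : 0 ≤ a) : CFC.rpow a x * CFC.rpow a y = CFC.rpow a (x + y) := by
  rw [show CFC.rpow a x = cfc (fun t : ℝ≥0 => t ^ x) a from rfl,
      show CFC.rpow a y = cfc (fun t : ℝ≥0 => t ^ y) a from rfl,
      show CFC.rpow a (x+y) = cfc (fun t : ℝ≥0 => t ^ (x+y)) a from rfl,
      ← cfc_mul _ _ a]
  refine cfc_congr fun t _ => ?_
  by_cases hxy : x + y = 0
  · have hx0 : x = 0 := le_antisymm (by linarith) hx
    have hy0 : y = 0 := le_antisymm (by linarith) hy
    simp [hx0, hy0]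
  · exact (NNReal.rpow_add' hxy t).symm

private lemma cordes_star_rpow (a : H →L[ℂ] H) (x : ℝ) (ha : 0 ≤ a) :
    star (CFC.rpow a x) = CFC.rpow a x :=
  (IsSelfAdjoint.of_nonneg CFC.rpow_nonneg)

private lemma cordes_sr_comm (a b : H →L[ℂ] H) :
    spectralRadius ℂ (a*b) = spectralRadius ℂ (b*a) := by
  have key : ∀ c d : H →L[ℂ] H, spectralRadius ℂ (c*d) ≤ spectralRadius ℂ (d*c) := by
    intro c d
    rw [spectralRadius, spectralRadius]
    refine iSup₂_le fun k hk => ?_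
    rcases eq_or_ne k 0 with rfl | h
    · simp
    · have heq : spectrum ℂ (c*d) \ {0} = spectrum ℂ (d*c) \ {0} :=
        spectrum.nonzero_mul_comm c d
      have hmem : k ∈ spectrum ℂ (c*d) \ {0} := ⟨hk, h⟩
      rw [heq] at hmem
      exact le_iSup₂ (f := fun k (_ : k ∈ spectrum ℂ (d*c)) => (‖k‖₊ : ENNReal)) k hmem.1
  exact le_antisymm (key a b) (key b a)

private lemma cordes_nnnorm_rpow_le [Nontrivial H] (a : H →L[ℂ] H) (c : ℝ) (hc : 0 ≤ c)
    (ha : 0 ≤ a) : ‖CFC.rpow a c‖₊ ≤ ‖a‖₊ ^ c := by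
  rw [show CFC.rpow a c = cfc (fun t : ℝ≥0 => t ^ c) a from rfl]
  apply nnnorm_cfc_nnreal_le
  intro x hx
  have hx' : (x:ℝ) ∈ spectrum ℝ a := by
    rw [← spectrum.preimage_algebraMap ℝ] at hx; exact hx
  have hle : (x:ℝ) ≤ ‖a‖ := (le_abs_self _).trans (by simpa using spectrum.norm_le_norm_of_mem hx')
  exact NNReal.rpow_le_rpow hle hc

private lemma cordes_midpoint_ineq [Nontrivial H] (a b : H →L[ℂ] H) (ha : 0 ≤ a) (hb : 0 ≤ b)
    (s t : ℝ) (hs : 0 ≤ s) (ht : 0 ≤ t) :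
    ‖CFC.rpow a ((s+t)/2) * CFC.rpow b ((s+t)/2)‖₊ ^ 2 ≤
      ‖CFC.rpow a s * CFC.rpow b s‖₊ * ‖CFC.rpow a t * CFC.rpow b t‖₊ := by
  set c := (s+t)/2 with hc
  have hc0 : 0 ≤ c := by positivity
  set X := CFC.rpow a c * CFC.rpow b c with hX
  have h1 : ‖X‖₊ ^ 2 = ‖star X * X‖₊ := by
    rw [CStarRing.nnnorm_star_mul_self, sq]
  have hstar : star X = CFC.rpow b c * CFC.rpow a c := by
    rw [hX, star_mul, cordes_star_rpow a c ha, cordes_star_rpow b c hb]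
  have h2 : star X * X = CFC.rpow b c * (CFC.rpow a (s+t) * CFC.rpow b c) := by
    rw [hstar, hX, show s + t = c + c by rw [hc]; ring,
        ← cordes_rpow_mul_rpow a c c hc0 hc0 ha]
    simp [mul_assoc]
  have e2 : (CFC.rpow a (s+t) * CFC.rpow b c) * CFC.rpow b c
      = CFC.rpow a s * (CFC.rpow a t * CFC.rpow b (s+t)) := by
    rw [mul_assoc, cordes_rpow_mul_rpow b c c hc0 hc0 hb, show c + c = s + t by rw [hc]; ring,
        ← cordes_rpow_mul_rpow a s t hs ht ha]
    simp [mul_assoc]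
  have e3 : (CFC.rpow a t * CFC.rpow b (s+t)) * CFC.rpow a s
      = (CFC.rpow a t * CFC.rpow b t) * (CFC.rpow b s * CFC.rpow a s) := by
    rw [show s + t = t + s by ring, ← cordes_rpow_mul_rpow b t s ht hs hb]
    simp [mul_assoc]
  have hsa : IsSelfAdjoint (star X * X) := IsSelfAdjoint.star_mul_self X
  have key : (‖star X * X‖₊ : ENNReal)
      ≤ (‖CFC.rpow a t * CFC.rpow b t‖₊ * ‖CFC.rpow b s * CFC.rpow a s‖₊ : ℝ≥0) := by
    calc (‖star X * X‖₊ : ENNReal) = spectralRadius ℂ (star X * X) :=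
          hsa.spectralRadius_eq_nnnorm.symm
    _ = spectralRadius ℂ ((CFC.rpow a (s+t) * CFC.rpow b c) * CFC.rpow b c) := by
          rw [h2, cordes_sr_comm]
    _ = spectralRadius ℂ (CFC.rpow a s * (CFC.rpow a t * CFC.rpow b (s+t))) := by rw [e2]
    _ = spectralRadius ℂ ((CFC.rpow a t * CFC.rpow b t) * (CFC.rpow b s * CFC.rpow a s)) := by
          rw [cordes_sr_comm, e3]
    _ ≤ ↑(‖(CFC.rpow a t * CFC.rpow b t) * (CFC.rpow b s * CFC.rpow a s)‖₊) :=
          spectrum.spectralRadius_le_nnnorm _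
    _ ≤ _ := by exact_mod_cast ENNReal.coe_le_coe.mpr (nnnorm_mul_le _ _)
  have key' : ‖star X * X‖₊ ≤ ‖CFC.rpow a t * CFC.rpow b t‖₊ * ‖CFC.rpow b s * CFC.rpow a s‖₊ := by
    exact_mod_cast key
  have hbs : ‖CFC.rpow b s * CFC.rpow a s‖₊ = ‖CFC.rpow a s * CFC.rpow b s‖₊ := by
    rw [← nnnorm_star, star_mul, cordes_star_rpow a s ha, cordes_star_rpow b s hb]
  rw [h1]
  calc ‖star X * X‖₊ ≤ _ := key'
  _ = ‖CFC.rpow a s * CFC.rpow b s‖₊ * ‖CFC.rpow a t * CFC.rpow b t‖₊ := by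
      rw [hbs, mul_comm]

private lemma cordes_nnreal_rpow_add (N : ℝ≥0) (x y : ℝ) (hx : 0 ≤ x) (hy : 0 ≤ y) :
    N ^ x * N ^ y = N ^ (x + y) := by
  by_cases hxy : x + y = 0
  · have hx0 : x = 0 := le_antisymm (by linarith) hx
    have hy0 : y = 0 := le_antisymm (by linarith) hy
    simp [hx0, hy0]
  · exact (NNReal.rpow_add' hxy N).symm

private lemma cordes_rpow0 (a : H →L[ℂ] H) (ha : 0 ≤ a) : CFC.rpow a 0 = 1 := CFC.rpow_zero a ha
private lemma cordes_rpow1 (a : H →L[ℂ] H) (ha : 0 ≤ a) : CFC.rpow a 1 = a := CFC.rpow_one a ha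

private lemma cordes_dyadic_ineq [Nontrivial H] (a b : H →L[ℂ] H) (ha : 0 ≤ a) (hb : 0 ≤ b) :
    ∀ n k : ℕ, k ≤ 2^n →
      ‖CFC.rpow a ((k:ℝ)/2^n) * CFC.rpow b ((k:ℝ)/2^n)‖₊ ≤ ‖a * b‖₊ ^ ((k:ℝ)/2^n) := by
  intro n
  induction n with
  | zero =>
    intro k hk
    interval_cases k
    · simp only [Nat.cast_zero, pow_zero, zero_div]
      rw [cordes_rpow0 a ha, cordes_rpow0 b hb, mul_one, NNReal.rpow_zero]
      simp [nnnorm_one]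
    · simp only [Nat.cast_one, pow_zero, div_one]
      rw [cordes_rpow1 a ha, cordes_rpow1 b hb, NNReal.rpow_one]
  | succ n IH =>
    intro k hk
    have h2 : (2:ℕ)^(n+1) = 2 * 2^n := by ring
    set i := k / 2 with hi
    set j := k - k / 2 with hj
    have hij : i + j = k := by omega
    have hi2 : i ≤ 2^n := by omega
    have hj2 : j ≤ 2^n := by omega
    set s := (i:ℝ)/2^n with hs
    set t := (j:ℝ)/2^n with ht
    have hs0 : 0 ≤ s := by positivity
    have ht0 : 0 ≤ t := by positivity
    have hmid : (k:ℝ)/2^(n+1) = (s+t)/2 := by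
      rw [hs, ht]
      have : (i:ℝ) + (j:ℝ) = (k:ℝ) := by exact_mod_cast congrArg (Nat.cast : ℕ → ℝ) hij
      field_simp
      rw [← this]; ring
    have key := cordes_midpoint_ineq a b ha hb s t hs0 ht0
    rw [← hmid] at key
    have hIH := mul_le_mul' (IH i hi2) (IH j hj2)
    have key2 : ‖CFC.rpow a ((k:ℝ)/2^(n+1)) * CFC.rpow b ((k:ℝ)/2^(n+1))‖₊ ^ 2
        ≤ (‖a*b‖₊ ^ ((k:ℝ)/2^(n+1))) ^ 2 := by
      refine key.trans (hIH.trans ?_)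
      rw [cordes_nnreal_rpow_add _ s t hs0 ht0]
      have hst : s + t = (k:ℝ)/2^(n+1) * 2 := by rw [hmid]; ring
      rw [hst, NNReal.rpow_mul, show (2:ℝ) = ((2:ℕ):ℝ) by norm_num, NNReal.rpow_natCast]
    exact (pow_le_pow_iff_left₀ zero_le zero_le two_ne_zero).mp key2

private lemma cordes_peel_ineq [Nontrivial H] (a b : H →L[ℂ] H) (ha : 0 ≤ a) (hb : 0 ≤ b)
    (q r : ℝ) (hq0 : 0 ≤ q) (hqr : q ≤ r) :
    ‖CFC.rpow a r * CFC.rpow b r‖₊ ≤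
      ‖a‖₊ ^ (r-q) * ‖b‖₊ ^ (r-q) * ‖CFC.rpow a q * CFC.rpow b q‖₊ := by
  have hd : 0 ≤ r - q := by linarith
  have hae : CFC.rpow a r = CFC.rpow a (r-q) * CFC.rpow a q := by
    rw [cordes_rpow_mul_rpow a (r-q) q hd hq0 ha]; norm_num
  have hbe : CFC.rpow b r = CFC.rpow b q * CFC.rpow b (r-q) := by
    rw [cordes_rpow_mul_rpow b q (r-q) hq0 hd hb]; norm_num
  rw [hae, hbe]
  calc ‖CFC.rpow a (r-q) * CFC.rpow a q * (CFC.rpow b q * CFC.rpow b (r-q))‖₊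
      = ‖CFC.rpow a (r-q) * ((CFC.rpow a q * CFC.rpow b q) * CFC.rpow b (r-q))‖₊ := by
        rw [mul_assoc, mul_assoc]
    _ ≤ ‖CFC.rpow a (r-q)‖₊ * (‖CFC.rpow a q * CFC.rpow b q‖₊ * ‖CFC.rpow b (r-q)‖₊) :=
        (nnnorm_mul_le _ _).trans (by gcongr; exact nnnorm_mul_le _ _)
    _ ≤ ‖a‖₊ ^ (r-q) * (‖CFC.rpow a q * CFC.rpow b q‖₊ * (‖b‖₊ ^ (r-q))) := by
        gcongr
        · exact cordes_nnnorm_rpow_le a _ hd ha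
        · exact cordes_nnnorm_rpow_le b _ hd hb
    _ = _ := by ring

end Helpers

theorem norm_rpow_mul_rpow_le {H : Type*} [NormedAddCommGroup H] [InnerProductSpace ℂ H]
    [CompleteSpace H] (A B : H →L[ℂ] H) (hA : 0 ≤ A) (hB : 0 ≤ B)
    (r : ℝ) (hr0 : 0 ≤ r) (hr1 : r ≤ 1) :
    ‖CFC.rpow A r * CFC.rpow B r‖ ≤ ‖A * B‖ ^ r := by
  obtain hH | hH := subsingleton_or_nontrivial H
  · have h0 : (CFC.rpow A r * CFC.rpow B r) = 0 := Subsingleton.elim _ _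
    rw [h0, norm_zero]
    exact Real.rpow_nonneg (norm_nonneg _) r
  rcases eq_or_lt_of_le hr0 with hr | hr
  · rw [← hr, cordes_rpow0 A hA, cordes_rpow0 B hB, mul_one, Real.rpow_zero, norm_one]
  by_cases hA0 : A = 0
  · subst hA0
    rw [CFC.zero_rpow hr.ne', zero_mul, norm_zero]
    exact Real.rpow_nonneg (norm_nonneg _) r
  by_cases hB0 : B = 0
  · subst hB0
    rw [CFC.zero_rpow hr.ne', mul_zero, norm_zero]
    exact Real.rpow_nonneg (norm_nonneg _) r
  have hAn : ‖A‖ ≠ 0 := by simpa using hA0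
  have hBn : ‖B‖ ≠ 0 := by simpa using hB0
  set k : ℕ → ℕ := fun n => ⌊(2^n : ℝ) * r⌋₊ with hk
  set q : ℕ → ℝ := fun n => (k n : ℝ) / 2^n with hq
  have h2pos : ∀ n : ℕ, (0:ℝ) < 2^n := fun n => by positivity
  have hkle : ∀ n, k n ≤ 2^n := by
    intro n
    have h2 : ⌊((2^n : ℕ) : ℝ)⌋₊ = 2^n := Nat.floor_natCast _
    have h3 : (2:ℝ)^n * r ≤ ((2^n : ℕ) : ℝ) := by push_cast; nlinarith [h2pos n]
    calc k n ≤ ⌊((2^n : ℕ) : ℝ)⌋₊ := Nat.floor_mono h3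
    _ = 2^n := h2
  have hq0 : ∀ n, 0 ≤ q n := fun n => by positivity
  have hqr : ∀ n, q n ≤ r := by
    intro n
    rw [hq]
    rw [div_le_iff₀ (h2pos n)]
    calc ((k n : ℝ)) ≤ (2^n : ℝ) * r := Nat.floor_le (by positivity)
    _ = r * 2^n := by ring
  have hqclose : ∀ n, r - q n ≤ 1 / 2^n := by
    intro n
    have h' : (2^n:ℝ) * r < (k n : ℝ) + 1 := Nat.lt_floor_add_one _
    have h'' : r ≤ ((k n : ℝ) + 1)/2^n := le_of_lt ((lt_div_iff₀ (h2pos n)).mpr (by linarith))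
    have hsplit : ((k n:ℝ)+1)/2^n = (k n:ℝ)/2^n + 1/2^n := add_div _ _ _
    have : q n = (k n:ℝ)/2^n := rfl
    linarith [h'', hsplit]
  have step : ∀ n, ‖CFC.rpow A r * CFC.rpow B r‖ ≤
      ‖A‖^(r - q n) * ‖B‖^(r - q n) * ‖A*B‖^(q n) := by
    intro n
    have p1 := cordes_peel_ineq A B hA hB (q n) r (hq0 n) (hqr n)
    have p2 : ‖CFC.rpow A (q n) * CFC.rpow B (q n)‖₊ ≤ ‖A * B‖₊ ^ (q n) := by
      simp only [hq]
      exact cordes_dyadic_ineq A B hA hB n (k n) (hkle n)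
    have p3 : ‖CFC.rpow A r * CFC.rpow B r‖₊ ≤
        ‖A‖₊^(r - q n) * ‖B‖₊^(r - q n) * ‖A*B‖₊^(q n) := p1.trans (by gcongr)
    have p4 := NNReal.coe_le_coe.mpr p3
    push_cast at p4
    exact p4
  have hhalf : Filter.Tendsto (fun n:ℕ => (1:ℝ)/2^n) Filter.atTop (nhds 0) := by
    have := tendsto_pow_atTop_nhds_zero_of_lt_one (by norm_num : (0:ℝ) ≤ 1/2) (by norm_num)
    simpa [div_pow] using this
  have hdelta : Filter.Tendsto (fun n => r - q n) Filter.atTop (nhds 0) :=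
    squeeze_zero (fun n => by linarith [hqr n]) hqclose hhalf
  have hqlim : Filter.Tendsto q Filter.atTop (nhds r) := by
    have := Filter.Tendsto.const_sub r hdelta
    simpa using this
  have t1 : Filter.Tendsto (fun n => ‖A‖^(r - q n)) Filter.atTop (nhds 1) := by
    have hc : ContinuousAt (fun x : ℝ => ‖A‖ ^ x) 0 := Real.continuousAt_const_rpow hAn
    have := hc.tendsto.comp hdelta
    simpa [Real.rpow_zero, Function.comp_def] using this
  have t2 : Filter.Tendsto (fun n => ‖B‖^(r - q n)) Filter.atTop (nhds 1) := by
    have hc : ContinuousAt (fun x : ℝ => ‖B‖ ^ x) 0 := Real.continuousAt_const_rpow hBn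
    have := hc.tendsto.comp hdelta
    simpa [Real.rpow_zero, Function.comp_def] using this
  have t3 : Filter.Tendsto (fun n => ‖A*B‖^(q n)) Filter.atTop (nhds (‖A*B‖^r)) := by
    have hc : ContinuousAt (fun x : ℝ => ‖A*B‖ ^ x) r := Real.continuousAt_const_rpow' hr.ne'
    exact hc.tendsto.comp hqlim
  have hlim : Filter.Tendsto (fun n => ‖A‖^(r - q n) * ‖B‖^(r - q n) * ‖A*B‖^(q n))
      Filter.atTop (nhds (‖A*B‖^r)) := by
    have := (t1.mul t2).mul t3
    simpa using this
  exact ge_of_tendsto' hlim step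
end

section
/- If A is a hyponormal bounded operator on a complex Hilbert space, then for every unit vector x, ⟨|A*|x, x⟩ ≤ ⟨|A|x, x⟩, where |A| = (A*A)^{1/2} and |A*| = (AA*)^{1/2}. -/
open scoped InnerProductSpace
open ContinuousLinearMap

set_option synthInstance.maxHeartbeats 1000000


open scoped NNReal ENNReal

lemma my_spectralRadius_mul_comm {A : Type*} [NormedRing A] [NormedAlgebra ℂ A] (a b : A) :
    spectralRadius ℂ (a * b) = spectralRadius ℂ (b * a) := by
  have key : ∀ (S : Set ℂ), (⨆ k ∈ S, (‖k‖₊ : ℝ≥0∞)) = ⨆ k ∈ S \ {0}, (‖k‖₊ : ℝ≥0∞) := by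
    intro S
    apply le_antisymm
    · refine iSup₂_le fun k hk => ?_
      rcases eq_or_ne k 0 with rfl | h
      · simp
      · exact le_iSup₂ (f := fun k (_ : k ∈ S \ {0}) => (‖k‖₊ : ℝ≥0∞)) k ⟨hk, h⟩
    · exact iSup₂_le fun k hk => le_iSup₂ (f := fun k (_ : k ∈ S) => (‖k‖₊ : ℝ≥0∞)) k hk.1
  rw [spectralRadius, spectralRadius, key, spectrum.nonzero_mul_comm, ← key]

section
variable {A : Type*} [CStarAlgebra A] [Nontrivial A] [PartialOrder A] [StarOrderedRing A]

lemma my_sqrt_le_sqrt_of_isUnit {a b : A} (ha : 0 ≤ a) (hb : 0 ≤ b) (hbu : IsUnit b)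
    (hab : a ≤ b) : CFC.sqrt a ≤ CFC.sqrt b := by
  have hb0 : (0 : ℝ≥0) ∉ spectrum ℝ≥0 b := spectrum.zero_notMem ℝ≥0 hbu
  have hsb_unit : IsUnit (CFC.sqrt b) := by
    rw [CFC.sqrt_eq_rpow]
    exact ⟨⟨b ^ (1/2 : ℝ), b ^ (-(1/2) : ℝ), CFC.rpow_mul_rpow_neg _ (hbu.isStrictlyPositive hb),
      CFC.rpow_neg_mul_rpow _ (hbu.isStrictlyPositive hb)⟩, rfl⟩
  rw [le_iff_norm_sqrt_mul_rpow _ _ (CFC.sqrt_nonneg _) (hsb_unit.isStrictlyPositive (CFC.sqrt_nonneg _))]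
  have h1 : ‖CFC.sqrt a * b ^ (-(1/2) : ℝ)‖ ≤ 1 :=
    (le_iff_norm_sqrt_mul_rpow _ _ ha (hbu.isStrictlyPositive hb)).mp hab
  -- rewrite (sqrt b)^(-(1/2)) = b^(-(1/4))
  have hsbr : CFC.sqrt b ^ (-(1/2) : ℝ) = b ^ (-(1/4) : ℝ) := by
    rw [CFC.sqrt_eq_rpow, CFC.rpow_rpow b _ _ (by norm_num) (hbu.isStrictlyPositive hb)]
    norm_num
  rw [hsbr]
  set s := CFC.sqrt (CFC.sqrt a) with hs_def
  set t := b ^ (-(1/4) : ℝ) with ht_def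
  have hs : (0 : A) ≤ s := CFC.sqrt_nonneg _
  have ht : (0 : A) ≤ t := CFC.rpow_nonneg
  have hss : s * s = CFC.sqrt a := CFC.sqrt_mul_sqrt_self _ (CFC.sqrt_nonneg _)
  have htt : t * t = b ^ (-(1/2) : ℝ) := by
    rw [ht_def, ← CFC.rpow_add hbu]
    norm_num
  rw [← sq_le_one_iff₀ (norm_nonneg _), sq, ← CStarRing.norm_star_mul_self, star_mul,
    IsSelfAdjoint.of_nonneg hs, IsSelfAdjoint.of_nonneg ht]
  -- ‖t * s * (s * t)‖ ≤ 1
  have hc : (0 : A) ≤ t * s * (s * t) := by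
    have h0 : (0 : A) ≤ s * s := hss ▸ CFC.sqrt_nonneg a
    have := conjugate_nonneg_of_nonneg h0 ht
    rwa [show t * (s * s) * t = t * s * (s * t) by noncomm_ring] at this
  have hcsa : IsSelfAdjoint (t * s * (s * t)) := .of_nonneg hc
  have hnorm_eq : ‖t * s * (s * t)‖ = (spectralRadius ℂ (t * s * (s * t))).toReal :=
    (hcsa.toReal_spectralRadius_complex_eq_norm).symm
  have hsr : spectralRadius ℂ (t * s * (s * t)) = spectralRadius ℂ ((s * s) * (t * t)) := by
    rw [show t * s * (s * t) = t * (s * (s * t)) by noncomm_ring,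
      my_spectralRadius_mul_comm, show s * (s * t) * t = (s * s) * (t * t) by noncomm_ring]
  have hfin : spectralRadius ℂ ((s * s) * (t * t)) ≤ (1 : ℝ≥0∞) := by
    refine (spectrum.spectralRadius_le_nnnorm _).trans ?_
    rw [hss, htt]
    exact_mod_cast h1
  calc ‖t * s * (s * t)‖ = (spectralRadius ℂ ((s * s) * (t * t))).toReal := by
        rw [hnorm_eq, hsr]
    _ ≤ (1 : ℝ≥0∞).toReal := ENNReal.toReal_mono (by simp) hfin
    _ = 1 := by simp
end

section
variable {A : Type*} [CStarAlgebra A] [Nontrivial A] [PartialOrder A] [StarOrderedRing A]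

lemma my_algebraMap_nonneg (r : ℝ≥0) : (0 : A) ≤ algebraMap ℝ≥0 A r := by
  have h := star_mul_self_nonneg (algebraMap ℝ≥0 A (NNReal.sqrt r))
  rwa [(IsSelfAdjoint.all _).algebraMap A |>.star_eq, ← map_mul,
    NNReal.mul_self_sqrt] at h

end

lemma my_sqrt_le_sqrt_add {A : Type*} [CStarAlgebra A] [Nontrivial A] [PartialOrder A]
    [StarOrderedRing A] {a b : A} (ha : 0 ≤ a) (hab : a ≤ b) {ε : ℝ≥0} (hε : 0 < ε) :
    CFC.sqrt a ≤ CFC.sqrt b + algebraMap ℝ≥0 A (NNReal.sqrt ε) := by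
  have hb : (0 : A) ≤ b := ha.trans hab
  set b' := b + algebraMap ℝ≥0 A ε with hb'_def
  have halg : (0 : A) ≤ algebraMap ℝ≥0 A ε := my_algebraMap_nonneg ε
  have hb' : (0 : A) ≤ b' := add_nonneg hb halg
  have hb'u : IsUnit b' := by
    refine CStarAlgebra.isUnit_of_le (algebraMap ℝ≥0 A ε) ?_
      ((IsUnit.map (algebraMap ℝ≥0 A) hε.ne'.isUnit).isStrictlyPositive halg)
    exact le_add_of_nonneg_left hb
  have h1 : CFC.sqrt a ≤ CFC.sqrt b' :=
    my_sqrt_le_sqrt_of_isUnit ha hb' hb'u (hab.trans (le_add_of_nonneg_right halg))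
  refine h1.trans ?_
  -- sqrt (b + ε) ≤ sqrt b + sqrt ε
  have hb'cfc : b' = cfc (fun x : ℝ≥0 => x + ε) b := by
    rw [cfc_add (R := ℝ≥0) b _ _, cfc_id' ℝ≥0 b, cfc_const ε b]
  have key : CFC.sqrt b' = cfc (fun x : ℝ≥0 => NNReal.sqrt (x + ε)) b := by
    rw [hb'cfc, CFC.sqrt_eq_cfc, ← cfc_comp' NNReal.sqrt (fun x : ℝ≥0 => x + ε) b]
  rw [key]
  have step : cfc (fun x : ℝ≥0 => NNReal.sqrt (x + ε)) b
      ≤ cfc (fun x : ℝ≥0 => NNReal.sqrt x + NNReal.sqrt ε) b := by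
    refine cfc_mono fun y hy => ?_
    have : y + ε ≤ (NNReal.sqrt y + NNReal.sqrt ε) ^ 2 := by
      rw [add_sq]
      calc y + ε = NNReal.sqrt y ^ 2 + NNReal.sqrt ε ^ 2 := by rw [NNReal.sq_sqrt, NNReal.sq_sqrt]
        _ ≤ NNReal.sqrt y ^ 2 + 2 * NNReal.sqrt y * NNReal.sqrt ε + NNReal.sqrt ε ^ 2 := by
            rw [add_assoc (NNReal.sqrt y ^ 2)]
            exact add_le_add le_rfl (le_add_of_nonneg_left zero_le)
    calc NNReal.sqrt (y + ε) ≤ NNReal.sqrt ((NNReal.sqrt y + NNReal.sqrt ε) ^ 2) :=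
          NNReal.sqrt_le_sqrt.mpr this
      _ = NNReal.sqrt y + NNReal.sqrt ε := NNReal.sqrt_sq _
  refine step.trans ?_
  rw [cfc_add (R := ℝ≥0) b _ _, cfc_const _ b, CFC.sqrt_eq_cfc]

theorem hyponormal_abs_star_le_abs {H : Type*} [NormedAddCommGroup H] [InnerProductSpace ℂ H]
    [CompleteSpace H] (A : H →L[ℂ] H)
    (hhyp : 0 ≤ adjoint A * A - A * adjoint A)
    (x : H) (hx : ‖x‖ = 1) :
    (⟪x, CFC.sqrt (A * adjoint A) x⟫_ℂ).re ≤ (⟪x, CFC.sqrt (adjoint A * A) x⟫_ℂ).re := by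
  have hxne : x ≠ 0 := fun h => by simp [h] at hx
  haveI : Nontrivial H := nontrivial_of_ne x 0 hxne
  haveI : Nontrivial (H →L[ℂ] H) := ⟨1, 0, fun h => hxne (by simpa using DFunLike.congr_fun h x)⟩
  have ha : (0 : H →L[ℂ] H) ≤ A * adjoint A := by
    simpa [ContinuousLinearMap.star_eq_adjoint] using mul_star_self_nonneg A
  have hab : A * adjoint A ≤ adjoint A * A := sub_nonneg.mp hhyp
  refine le_of_forall_pos_le_add fun δ hδ => ?_
  set η : ℝ≥0 := δ.toNNReal with hη_def
  have hη : (0 : ℝ≥0) < η ^ 2 := pow_pos (Real.toNNReal_pos.mpr hδ) 2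
  have h := my_sqrt_le_sqrt_add ha hab hη
  rw [NNReal.sqrt_sq] at h
  rw [ContinuousLinearMap.le_def] at h
  have h2 := h.re_inner_nonneg_right x
  have hAlg : (algebraMap ℝ≥0 (H →L[ℂ] H) η) x = ((η : ℝ) : ℂ) • x := by
    rw [Algebra.algebraMap_eq_smul_one, ContinuousLinearMap.smul_apply,
      ContinuousLinearMap.one_apply, NNReal.smul_def, ← Complex.coe_algebraMap, algebraMap_smul]
  have hre : ((⟪x, ((η : ℝ) : ℂ) • x⟫_ℂ).re : ℝ) = δ := by
    rw [inner_smul_right]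
    simp only [Complex.re_ofReal_mul]
    rw [inner_self_eq_norm_sq_to_K (𝕜 := ℂ) x, hx]
    simp [hη_def, Real.coe_toNNReal _ hδ.le]
  simp only [ContinuousLinearMap.sub_apply, ContinuousLinearMap.add_apply, inner_sub_right,
    inner_add_right, map_sub, map_add, RCLike.re_to_complex, hAlg, hre] at h2
  linarith
end

section
/- Let A₁, A₂ be positive bounded operators on a complex Hilbert space. Then ‖(A₁ + A₂)/2‖² ≤ ‖(A₁² + A₂²)/2‖ - inf over unit vectors x of (1/2)·(⟨|A₁ - μ(x)|²x, x⟩ + ⟨|A₂ - μ(x)|²x, x⟩), where μ(x) = (⟨A₁x, x⟩ + ⟨A₂x, x⟩)/2. -/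
open scoped InnerProductSpace
open ContinuousLinearMap

set_option synthInstance.maxHeartbeats 1000000
set_option maxHeartbeats 4000000

section Aux

variable {H : Type*} [NormedAddCommGroup H] [InnerProductSpace ℂ H] [CompleteSpace H]

lemma creal (z : ℂ) : RCLike.re z = z.re := rfl

lemma inner_sq_eq_norm_sq (S : H →L[ℂ] H) (hS : IsSelfAdjoint S) (x : H) :
    (⟪x, (S ^ 2 : H →L[ℂ] H) x⟫_ℂ).re = ‖S x‖ ^ 2 := by
  have h1 : (S ^ 2 : H →L[ℂ] H) x = S (S x) := by rw [pow_two]; rfl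
  have h2 : ⟪x, S (S x)⟫_ℂ = ⟪S x, S x⟫_ℂ := by
    rw [← adjoint_inner_left S (S x) x, isSelfAdjoint_iff'.mp hS]
  rw [h1, h2, ← creal]
  exact inner_self_eq_norm_sq (𝕜 := ℂ) (S x)

lemma norm_le_of_inner_le (T : H →L[ℂ] H) (hT : 0 ≤ T) {c : ℝ} (hc : 0 ≤ c)
    (h : ∀ x : H, (⟪x, T x⟫_ℂ).re ≤ c * ‖x‖ ^ 2) : ‖T‖ ≤ c := by
  set S := CFC.sqrt T with hSdef
  have hSnn : 0 ≤ S := CFC.sqrt_nonneg (a := T)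
  have hSsa : IsSelfAdjoint S := IsSelfAdjoint.of_nonneg hSnn
  have hSmul : S * S = T := CFC.sqrt_mul_sqrt_self T hT
  have hpt : ∀ x : H, ‖S x‖ ≤ Real.sqrt c * ‖x‖ := by
    intro x
    have h1 : ‖S x‖ ^ 2 = (⟪x, T x⟫_ℂ).re := by
      rw [← hSmul, ← inner_sq_eq_norm_sq S hSsa x, pow_two]
    have h2 : ‖S x‖ ^ 2 ≤ c * ‖x‖ ^ 2 := h1 ▸ h x
    have h3 : ‖S x‖ = Real.sqrt (‖S x‖ ^ 2) := by
      rw [Real.sqrt_sq (norm_nonneg _)]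
    rw [h3]
    calc Real.sqrt (‖S x‖ ^ 2) ≤ Real.sqrt (c * ‖x‖ ^ 2) := Real.sqrt_le_sqrt h2
      _ = Real.sqrt c * ‖x‖ := by
          rw [Real.sqrt_mul hc, Real.sqrt_sq (norm_nonneg _)]
  have hSnorm : ‖S‖ ≤ Real.sqrt c := S.opNorm_le_bound (Real.sqrt_nonneg c) hpt
  have hTnorm : ‖T‖ = ‖S‖ * ‖S‖ := by
    rw [← hSmul]
    nth_rewrite 1 [← hSsa.star_eq]
    exact CStarRing.norm_star_mul_self
  rw [hTnorm]
  calc ‖S‖ * ‖S‖ ≤ Real.sqrt c * Real.sqrt c :=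
        mul_le_mul hSnorm hSnorm (norm_nonneg _) (Real.sqrt_nonneg c)
    _ = c := Real.mul_self_sqrt hc

end Aux

theorem norm_avg_sq_le {H : Type*} [NormedAddCommGroup H] [InnerProductSpace ℂ H]
    [CompleteSpace H] (A₁ A₂ : H →L[ℂ] H) (h1 : 0 ≤ A₁) (h2 : 0 ≤ A₂)
    (μ : H → ℝ) (hμ : ∀ x : H, μ x = ((⟪x, A₁ x⟫_ℂ).re + (⟪x, A₂ x⟫_ℂ).re) / 2) :
    ‖(2 : ℝ)⁻¹ • (A₁ + A₂)‖ ^ 2 ≤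
      ‖(2 : ℝ)⁻¹ • (A₁ ^ 2 + A₂ ^ 2)‖ -
        ⨅ x : {x : H // ‖x‖ = 1},
          (1 / 2) * ((⟪(x : H), (((A₁ - μ (x : H) • 1) ^ 2 : H →L[ℂ] H) x)⟫_ℂ).re +
            (⟪(x : H), (((A₂ - μ (x : H) • 1) ^ 2 : H →L[ℂ] H) x)⟫_ℂ).re) := by
  have h1p : A₁.IsPositive := (A₁.nonneg_iff_isPositive).mp h1
  have h2p : A₂.IsPositive := (A₂.nonneg_iff_isPositive).mp h2
  set T : H →L[ℂ] H := (2 : ℝ)⁻¹ • (A₁ + A₂) with hTdef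
  set B : H →L[ℂ] H := (2 : ℝ)⁻¹ • (A₁ ^ 2 + A₂ ^ 2) with hBdef
  set f : {x : H // ‖x‖ = 1} → ℝ := fun x =>
    (1 / 2) * ((⟪(x : H), (((A₁ - μ (x : H) • 1) ^ 2 : H →L[ℂ] H) x)⟫_ℂ).re +
      (⟪(x : H), (((A₂ - μ (x : H) • 1) ^ 2 : H →L[ℂ] H) x)⟫_ℂ).re) with hfdef
  -- self-adjointness of shifted operators
  have hsa : ∀ (A : H →L[ℂ] H), A.IsPositive → ∀ t : ℝ,
      IsSelfAdjoint (A - t • (1 : H →L[ℂ] H)) := by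
    intro A hA t
    have h0 : t • (1 : H →L[ℂ] H) = (t : ℂ) • (1 : H →L[ℂ] H) := by
      ext x; simp
    rw [isSelfAdjoint_iff, star_sub, hA.isSelfAdjoint.star_eq, h0, star_smul, star_one]
    norm_num
  -- f x as sum of norms squared
  have hf_norm : ∀ x : {x : H // ‖x‖ = 1},
      f x = (1 / 2) * (‖(A₁ - μ (x : H) • 1) (x : H)‖ ^ 2 +
        ‖(A₂ - μ (x : H) • 1) (x : H)‖ ^ 2) := by
    intro x
    rw [hfdef]
    simp only
    rw [inner_sq_eq_norm_sq _ (hsa A₁ h1p _), inner_sq_eq_norm_sq _ (hsa A₂ h2p _)]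
  have hf_nonneg : ∀ x, 0 ≤ f x := by
    intro x
    rw [hf_norm x]
    positivity
  -- inner with scalar average operators
  have hinner_avg : ∀ (C₁ C₂ : H →L[ℂ] H) (x : H),
      (⟪x, ((2:ℝ)⁻¹ • (C₁ + C₂)) x⟫_ℂ).re
        = ((⟪x, C₁ x⟫_ℂ).re + (⟪x, C₂ x⟫_ℂ).re) / 2 := by
    intro C₁ C₂ x
    simp only [ContinuousLinearMap.smul_apply, ContinuousLinearMap.add_apply]
    rw [RCLike.real_smul_eq_coe_smul (K := ℂ), inner_smul_right, inner_add_right]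
    simp only [Complex.mul_re, Complex.add_re, Complex.ofReal_re, Complex.ofReal_im,
      RCLike.ofReal_re, RCLike.ofReal_im, zero_mul, sub_zero]
    norm_num
    ring
  -- key identity : for unit x, μ x ^ 2 + f x = re ⟪x, B x⟫
  have hkey : ∀ x : {x : H // ‖x‖ = 1}, μ (x : H) ^ 2 + f x = (⟪(x : H), B (x : H)⟫_ℂ).re := by
    intro x
    obtain ⟨x, hx⟩ := x
    have hre : ∀ (A : H →L[ℂ] H), (⟪A x, x⟫_ℂ).re = (⟪x, A x⟫_ℂ).re := fun A =>
      inner_re_symm (𝕜 := ℂ) (A x) x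
    have hnorm : ∀ (A : H →L[ℂ] H), ∀ t : ℝ, ‖(A - t • (1 : H →L[ℂ] H)) x‖ ^ 2 =
        ‖A x‖ ^ 2 - 2 * t * (⟪x, A x⟫_ℂ).re + t ^ 2 := by
      intro A t
      have happ : (A - t • (1 : H →L[ℂ] H)) x = A x - t • x := by
        simp [ContinuousLinearMap.sub_apply]
      have hsm : ⟪A x, t • x⟫_ℂ = (t : ℂ) * ⟪A x, x⟫_ℂ := by
        rw [RCLike.real_smul_eq_coe_smul (K := ℂ), inner_smul_right]
        norm_cast
      rw [happ, @norm_sub_sq ℂ, hsm, norm_smul, hx]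
      simp only [creal, Complex.mul_re, Complex.ofReal_re, Complex.ofReal_im, Real.norm_eq_abs,
        zero_mul, sub_zero, mul_one]
      rw [hre A, sq_abs]
      ring
    have hBx : (⟪x, B x⟫_ℂ).re = (‖A₁ x‖ ^ 2 + ‖A₂ x‖ ^ 2) / 2 := by
      rw [hBdef, hinner_avg (A₁ ^ 2) (A₂ ^ 2) x,
        inner_sq_eq_norm_sq A₁ h1p.isSelfAdjoint x, inner_sq_eq_norm_sq A₂ h2p.isSelfAdjoint x]
    have hμx : μ x = ((⟪x, A₁ x⟫_ℂ).re + (⟪x, A₂ x⟫_ℂ).re) / 2 := hμ x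
    rw [hf_norm ⟨x, hx⟩]
    simp only
    rw [hnorm A₁ (μ x), hnorm A₂ (μ x), hBx, hμx]
    ring
  set m : ℝ := ⨅ x : {x : H // ‖x‖ = 1}, f x with hmdef
  by_cases hH : ∃ x : H, x ≠ 0
  · -- nontrivial case
    have : Nontrivial H := ⟨⟨hH.choose, 0, hH.choose_spec⟩⟩
    have hsph : Nonempty {x : H // ‖x‖ = 1} := by
      obtain ⟨x, hx⟩ := NormedSpace.sphere_nonempty (E := H) (x := 0) (r := 1) |>.mpr zero_le_one
      exact ⟨⟨x, by simpa using hx⟩⟩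
    have hbdd : BddBelow (Set.range f) := ⟨0, by rintro _ ⟨x, rfl⟩; exact hf_nonneg x⟩
    have hm_le : ∀ x, m ≤ f x := fun x => ciInf_le hbdd x
    have hm_nonneg : 0 ≤ m := le_ciInf hf_nonneg
    -- for unit x, μ x ^ 2 ≤ ‖B‖ - m
    have hBineq : ∀ x : {x : H // ‖x‖ = 1}, μ (x : H) ^ 2 ≤ ‖B‖ - m := by
      intro x
      have h4 : (⟪(x : H), B (x : H)⟫_ℂ).re ≤ ‖B‖ := by
        calc (⟪(x : H), B (x : H)⟫_ℂ).re ≤ ‖⟪(x : H), B (x : H)⟫_ℂ‖ := Complex.re_le_norm _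
          _ ≤ ‖(x : H)‖ * ‖B (x : H)‖ := norm_inner_le_norm _ _
          _ ≤ ‖(x : H)‖ * (‖B‖ * ‖(x : H)‖) :=
              mul_le_mul_of_nonneg_left (B.le_opNorm _) (norm_nonneg _)
          _ = ‖B‖ := by rw [x.2]; ring
      have h5 := hkey x
      have h6 := hm_le x
      linarith
    have hc : 0 ≤ ‖B‖ - m := by
      obtain ⟨x⟩ := hsph
      have := hBineq x
      nlinarith [sq_nonneg (μ (x : H))]
    -- μ nonneg
    have hμnn : ∀ x : H, 0 ≤ μ x := by
      intro x
      rw [hμ x]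
      have ha := h1p.inner_nonneg_right x
      have hb := h2p.inner_nonneg_right x
      replace ha := (Complex.nonneg_iff.mp ha).1
      replace hb := (Complex.nonneg_iff.mp hb).1
      linarith
    have hTpos : 0 ≤ T := by
      rw [T.nonneg_iff_isPositive, hTdef]
      have hap := h1p.add h2p
      have hsaT : IsSelfAdjoint ((2:ℝ)⁻¹ • (A₁ + A₂)) := by
        have h0 : (2:ℝ)⁻¹ • (A₁ + A₂) = (2 : ℂ)⁻¹ • (A₁ + A₂) := by
          ext x
          simp only [ContinuousLinearMap.smul_apply]
          rw [RCLike.real_smul_eq_coe_smul (K := ℂ), RCLike.ofReal_inv, RCLike.ofReal_ofNat]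
        rw [isSelfAdjoint_iff, h0, star_smul, hap.isSelfAdjoint.star_eq]
        norm_num
      refine ⟨hsaT.isSymmetric, fun x => ?_⟩
      have h7 : T.reApplyInnerSelf x = (⟪x, T x⟫_ℂ).re := by
        rw [reApplyInnerSelf_apply]
        exact inner_re_symm (𝕜 := ℂ) (T x) x
      have h8 := hinner_avg A₁ A₂ x
      have ha := h1p.inner_nonneg_right x
      have hb := h2p.inner_nonneg_right x
      replace ha := (Complex.nonneg_iff.mp ha).1
      replace hb := (Complex.nonneg_iff.mp hb).1
      rw [show ((2:ℝ)⁻¹ • (A₁ + A₂)) = T from hTdef.symm, h7, h8]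
      linarith
    have hTle : ‖T‖ ≤ Real.sqrt (‖B‖ - m) := by
      apply norm_le_of_inner_le T hTpos (Real.sqrt_nonneg _)
      intro x
      by_cases hx0 : x = 0
      · simp [hx0]
      · set u : H := ‖x‖⁻¹ • x with hudef
        have hxn : (0:ℝ) < ‖x‖ := norm_pos_iff.mpr hx0
        have hnu : ‖u‖ = 1 := by
          rw [hudef, norm_smul, norm_inv, norm_norm, inv_mul_cancel₀ hxn.ne']
        have hxu : x = (‖x‖ : ℝ) • u := by
          rw [hudef, smul_smul, mul_inv_cancel₀ hxn.ne', one_smul]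
        rw [RCLike.real_smul_eq_coe_smul (K := ℂ) ‖x‖ u] at hxu
        have hscale : (⟪x, T x⟫_ℂ).re = ‖x‖ ^ 2 * (⟪u, T u⟫_ℂ).re := by
          simp only [← creal]
          conv_lhs => rw [hxu]
          rw [map_smul, inner_smul_left, inner_smul_right, RCLike.conj_ofReal, ← mul_assoc,
            ← RCLike.ofReal_mul, RCLike.re_ofReal_mul]
          ring
        have hμu : (⟪u, T u⟫_ℂ).re = μ u := by
          rw [hμ u, hTdef, hinner_avg A₁ A₂ u]
        have hμu_le : μ u ≤ Real.sqrt (‖B‖ - m) := by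
          have h5 := hBineq ⟨u, hnu⟩
          have h6 := hμnn u
          nlinarith [Real.sq_sqrt hc, Real.sqrt_nonneg (‖B‖ - m)]
        rw [hscale, hμu]
        have h9 : (0:ℝ) ≤ ‖x‖ ^ 2 := by positivity
        nlinarith
    have h10 := Real.sq_sqrt hc
    nlinarith [norm_nonneg T, Real.sqrt_nonneg (‖B‖ - m)]
  · -- subsingleton case
    push_neg at hH
    have hempty : IsEmpty {x : H // ‖x‖ = 1} := by
      constructor
      rintro ⟨x, hx⟩
      rw [hH x] at hx
      simp at hx
    have hm0 : m = 0 := by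
      rw [hmdef, iInf_of_isEmpty]
      exact Real.sInf_empty
    have hT0 : T = 0 := by
      ext x
      rw [hH x]
      simp
    rw [hm0, hT0]
    simp [norm_nonneg]
end

section
/- Let A be a bounded linear operator on a complex Hilbert space. Then ω(A)² ≤ (1/2)·(‖|A|² + |A*|²‖ - inf_{‖x‖=1} ξ(x)), where ξ(x) = ⟨(| |A| - m(x)·I |² + | |A*| - m(x)·I |²)x, x⟩ with m(x) = (1/2)·⟨(|A| + |A*|)x, x⟩. -/
open scoped InnerProductSpace
open ContinuousLinearMap

set_option synthInstance.maxHeartbeats 1000000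

/-- The absolute value `|A| = (A*A)^{1/2}` of an operator. -/
noncomputable def opAbs {H : Type*} [NormedAddCommGroup H] [InnerProductSpace ℂ H]
    [CompleteSpace H] (A : H →L[ℂ] H) : H →L[ℂ] H :=
  CFC.sqrt (adjoint A * A)

set_option maxHeartbeats 1000000

section Aux
open Polynomial

variable {H : Type*} [NormedAddCommGroup H] [InnerProductSpace ℂ H] [CompleteSpace H]


theorem aeval_intertwine (A : H →L[ℂ] H) (p : ℝ[X]) :
    A * aeval (adjoint A * A) p = aeval (A * adjoint A) p * A := by
  induction p using Polynomial.induction_on' with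
  | add p q hp hq => simp [map_add, mul_add, add_mul, hp, hq]
  | monomial n r =>
    simp only [aeval_monomial]
    have key : ∀ n : ℕ, A * (adjoint A * A) ^ n = (A * adjoint A) ^ n * A := by
      intro n
      induction n with
      | zero => simp
      | succ k ih =>
        rw [pow_succ, ← mul_assoc, ih, pow_succ]
        noncomm_ring
    rw [← mul_assoc, ← Algebra.commutes r A, mul_assoc, key, ← mul_assoc]

theorem cfc_intertwine_s18 (A : H →L[ℂ] H) (f : ℝ → ℝ) (hf : Continuous f) :
    A * cfc f (adjoint A * A) = cfc f (A * adjoint A) * A := by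
  have hP : IsSelfAdjoint (adjoint A * A) := by
    rw [← star_eq_adjoint]; exact .star_mul_self A
  have hQ : IsSelfAdjoint (A * adjoint A) := by
    nth_rewrite 1 [← adjoint_adjoint A]
    rw [← star_eq_adjoint]; exact .star_mul_self (adjoint A)
  set P := adjoint A * A with hPdef
  set Q := A * adjoint A with hQdef
  set M : ℝ := max ‖P‖ ‖Q‖ * ‖(1 : H →L[ℂ] H)‖ with hM
  have hsub : ∀ (T : H →L[ℂ] H), ‖T‖ * ‖(1 : H →L[ℂ] H)‖ ≤ M →
      spectrum ℝ T ⊆ Set.Icc (-M) M := by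
    intro T hTM x hx
    have h1 := spectrum.norm_le_norm_mul_of_mem hx
    rw [Real.norm_eq_abs] at h1
    have h2 := h1.trans hTM
    constructor <;> [linarith [neg_abs_le x]; linarith [le_abs_self x]]
  have hPs := hsub P (mul_le_mul_of_nonneg_right (le_max_left _ _) (norm_nonneg _))
  have hQs := hsub Q (mul_le_mul_of_nonneg_right (le_max_right _ _) (norm_nonneg _))
  have key : ∀ ε : ℝ, 0 < ε → ‖A * cfc f P - cfc f Q * A‖ ≤ 2 * ε * ‖A‖ := by
    intro ε hε
    obtain ⟨p, hp⟩ := exists_polynomial_near_of_continuousOn (-M) M f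
      (hf.continuousOn) ε hε
    have h1 : ‖cfc f P - aeval P p‖ ≤ ε := by
      rw [← cfc_polynomial p P hP, ← cfc_sub f p.eval P hf.continuousOn
        (Polynomial.continuous p).continuousOn]
      refine norm_cfc_le hε.le fun x hx => ?_
      rw [Real.norm_eq_abs, abs_sub_comm]
      exact (hp x (hPs hx)).le
    have h2 : ‖cfc f Q - aeval Q p‖ ≤ ε := by
      rw [← cfc_polynomial p Q hQ, ← cfc_sub f p.eval Q hf.continuousOn
        (Polynomial.continuous p).continuousOn]
      refine norm_cfc_le hε.le fun x hx => ?_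
      rw [Real.norm_eq_abs, abs_sub_comm]
      exact (hp x (hQs hx)).le
    have e : A * cfc f P - cfc f Q * A
        = A * (cfc f P - aeval P p) - (cfc f Q - aeval Q p) * A := by
      rw [mul_sub, sub_mul, hPdef, hQdef, aeval_intertwine A p]
      abel
    calc ‖A * cfc f P - cfc f Q * A‖
        = ‖A * (cfc f P - aeval P p) - (cfc f Q - aeval Q p) * A‖ := by rw [e]
      _ ≤ ‖A * (cfc f P - aeval P p)‖ + ‖(cfc f Q - aeval Q p) * A‖ := norm_sub_le _ _
      _ ≤ ‖A‖ * ε + ε * ‖A‖ := by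
          refine add_le_add ((norm_mul_le _ _).trans ?_) ((norm_mul_le _ _).trans ?_)
          · exact mul_le_mul_of_nonneg_left h1 (norm_nonneg _)
          · exact mul_le_mul_of_nonneg_right h2 (norm_nonneg _)
      _ = 2 * ε * ‖A‖ := by ring
  have h0 : ‖A * cfc f P - cfc f Q * A‖ ≤ 0 := by
    refine le_of_forall_pos_le_add fun ε hε => ?_
    have hk := key (ε / (2 * ‖A‖ + 1)) (by positivity)
    have hb : 2 * (ε / (2 * ‖A‖ + 1)) * ‖A‖ ≤ ε := by
      rw [mul_comm (2:ℝ), mul_assoc, div_mul_eq_mul_div, div_le_iff₀ (by positivity)]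
      nlinarith [norm_nonneg A]
    linarith
  exact sub_eq_zero.mp (norm_le_zero_iff.mp h0)


lemma isSelfAdjoint_adjoint_mul (A : H →L[ℂ] H) : IsSelfAdjoint (adjoint A * A) := by
  rw [← star_eq_adjoint]; exact .star_mul_self A

lemma nonneg_adjoint_mul (A : H →L[ℂ] H) : 0 ≤ adjoint A * A := by
  rw [← star_eq_adjoint]; exact star_mul_self_nonneg A

lemma mul_adjoint_eq (A : H →L[ℂ] H) : A * adjoint A = adjoint (adjoint A) * adjoint A := by
  rw [adjoint_adjoint]

lemma cfc_sqrt_mul_self (A : H →L[ℂ] H) :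
    cfc Real.sqrt (adjoint A * A) * cfc Real.sqrt (adjoint A * A) = adjoint A * A := by
  have hP := isSelfAdjoint_adjoint_mul A
  rw [← cfc_mul Real.sqrt Real.sqrt _ Real.continuous_sqrt.continuousOn
    Real.continuous_sqrt.continuousOn]
  have : ∀ s ∈ spectrum ℝ (adjoint A * A), Real.sqrt s * Real.sqrt s = id s := by
    intro s hs
    exact Real.mul_self_sqrt (spectrum_nonneg_of_nonneg (nonneg_adjoint_mul A) hs)
  rw [cfc_congr this, cfc_id ℝ _ hP]

lemma opAbs_eq_cfc (A : H →L[ℂ] H) : opAbs A = cfc Real.sqrt (adjoint A * A) := by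
  have hP := isSelfAdjoint_adjoint_mul A
  refine CFC.sqrt_unique (cfc_sqrt_mul_self A) ?_
  exact cfc_nonneg fun s _ => Real.sqrt_nonneg s

lemma norm_apply_eq_cfc_sqrt (A : H →L[ℂ] H) (y : H) :
    ‖A y‖ = ‖cfc Real.sqrt (adjoint A * A) y‖ := by
  set B := cfc Real.sqrt (adjoint A * A) with hBdef
  have hB : IsSelfAdjoint B := cfc_predicate Real.sqrt (adjoint A * A)
  have h1 : ‖A y‖ ^ 2 = (⟪y, (adjoint A * A) y⟫_ℂ).re := by
    rw [← inner_self_eq_norm_sq (𝕜 := ℂ) (A y)]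
    congr 1
    rw [ContinuousLinearMap.mul_apply, adjoint_inner_right]
    rfl
  have h2 : ‖B y‖ ^ 2 = (⟪y, (adjoint A * A) y⟫_ℂ).re := by
    rw [← inner_self_eq_norm_sq (𝕜 := ℂ) (B y), ← cfc_sqrt_mul_self A]
    congr 1
    rw [ContinuousLinearMap.mul_apply]
    nth_rewrite 2 [← hB.adjoint_eq]
    rw [adjoint_inner_right, inner_re_symm]
    rfl
  rw [← Real.sqrt_sq (norm_nonneg (A y)), ← Real.sqrt_sq (norm_nonneg (B y)), h1, h2]

lemma re_inner_le_of_le {T S : H →L[ℂ] H} (h : T ≤ S) (x : H) :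
    (⟪x, T x⟫_ℂ).re ≤ (⟪x, S x⟫_ℂ).re := by
  have h0 : (0 : H →L[ℂ] H) ≤ S - T := sub_nonneg.mpr h
  have := ((nonneg_iff_isPositive (S - T)).mp h0).inner_nonneg_right x
  rw [ContinuousLinearMap.sub_apply, inner_sub_right] at this
  have hre : RCLike.re (⟪x, S x⟫_ℂ - ⟪x, T x⟫_ℂ) = (⟪x, S x⟫_ℂ).re - (⟪x, T x⟫_ℂ).re := by
    simp
  have h3 := (RCLike.nonneg_iff.mp this).1
  rw [hre] at h3
  linarith

lemma re_inner_nonneg_of_nonneg {T : H →L[ℂ] H} (h : (0 : H →L[ℂ] H) ≤ T) (x : H) :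
    0 ≤ (⟪x, T x⟫_ℂ).re := by
  simpa using re_inner_le_of_le h x

theorem mixed_bound (A : H →L[ℂ] H) (x : H) (hx : ‖x‖ = 1) :
    ‖⟪x, A x⟫_ℂ‖ ≤ ((⟪x, cfc Real.sqrt (adjoint A * A) x⟫_ℂ).re
      + (⟪x, cfc Real.sqrt (A * adjoint A) x⟫_ℂ).re) / 2 := by
  have hP : IsSelfAdjoint (adjoint A * A) := isSelfAdjoint_adjoint_mul A
  have hQ : IsSelfAdjoint (A * adjoint A) := by
    rw [mul_adjoint_eq]; exact isSelfAdjoint_adjoint_mul (adjoint A)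
  have hP0 : 0 ≤ adjoint A * A := nonneg_adjoint_mul A
  have hQ0 : 0 ≤ A * adjoint A := by rw [mul_adjoint_eq]; exact nonneg_adjoint_mul (adjoint A)
  set P := adjoint A * A with hPdef
  set Q := A * adjoint A with hQdef
  set B := cfc Real.sqrt P with hBdef
  set C := cfc Real.sqrt Q with hCdef
  have hB : IsSelfAdjoint B := cfc_predicate Real.sqrt P
  have hC : IsSelfAdjoint C := cfc_predicate Real.sqrt Q
  -- the two nonneg quantities
  set b := (⟪x, B x⟫_ℂ).re with hbdef
  set c := (⟪x, C x⟫_ℂ).re with hcdef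
  have hbc : ∀ ε : ℝ, 0 < ε → ‖⟪x, A x⟫_ℂ‖ ≤ (b + c) / 2 + ε := by
    intro ε hε
    set pe : ℝ → ℝ := fun s => (ε + Real.sqrt s)⁻¹ with hpedef
    have hpe : Continuous pe :=
      (continuous_const.add Real.continuous_sqrt).inv₀ fun s => (add_pos_of_pos_of_nonneg hε (Real.sqrt_nonneg s)).ne'
    set g : ℝ → ℝ := fun s => pe s * Real.sqrt s with hgdef
    have hg : Continuous g := hpe.mul Real.continuous_sqrt
    set r4 : ℝ → ℝ := fun s => Real.sqrt (Real.sqrt s) with hr4def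
    have hr4 : Continuous r4 := Real.continuous_sqrt.comp Real.continuous_sqrt
    set k : ℝ → ℝ := fun s => pe s * Real.sqrt s * pe s with hkdef
    have hk : Continuous k := (hpe.mul Real.continuous_sqrt).mul hpe
    set R := cfc pe P with hRdef
    set Br := cfc r4 P with hBrdef
    have hBrsa : IsSelfAdjoint Br := cfc_predicate r4 P
    set T := A * (R * Br) with hTdef
    -- Br * Br = B
    have hBrBr : Br * Br = B := by
      rw [hBrdef, hBdef, ← cfc_mul r4 r4 P hr4.continuousOn hr4.continuousOn]
      exact cfc_congr fun s _ => Real.mul_self_sqrt (Real.sqrt_nonneg s)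
    -- A * cfc g P = T * Br
    have hAg : A * cfc g P = T * Br := by
      rw [hTdef, mul_assoc, mul_assoc, hBrBr, hgdef,
        cfc_mul pe Real.sqrt P hpe.continuousOn Real.continuous_sqrt.continuousOn]
    -- tail bound
    have hTail : ‖A - A * cfc g P‖ ≤ ε := by
      refine opNorm_le_bound _ hε.le fun y => ?_
      have e1 : (A - A * cfc g P) y = A ((cfc (fun s => 1 - g s) P) y) := by
        rw [cfc_sub (fun _ => 1) g P continuous_const.continuousOn hg.continuousOn,
          cfc_const_one ℝ P]
        simp [ContinuousLinearMap.sub_apply, ContinuousLinearMap.mul_apply]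
      rw [e1, norm_apply_eq_cfc_sqrt A]
      have e2 : (cfc Real.sqrt (adjoint A * A)) ((cfc (fun s => 1 - g s) P) y)
          = (cfc (fun s => Real.sqrt s * (1 - g s)) P) y := by
        rw [cfc_mul Real.sqrt (fun s => 1 - g s) P Real.continuous_sqrt.continuousOn
          (continuous_const.sub hg).continuousOn]
        rfl
      rw [e2]
      refine (le_opNorm _ y).trans ?_
      have hcfc : ‖cfc (fun s => Real.sqrt s * (1 - g s)) P‖ ≤ ε := by
        refine norm_cfc_le hε.le fun s hs => ?_
        have ht : 0 ≤ Real.sqrt s := Real.sqrt_nonneg s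
        have hd : 0 < ε + Real.sqrt s := by positivity
        have hval : Real.sqrt s * (1 - g s) = ε * (Real.sqrt s * (ε + Real.sqrt s)⁻¹) := by
          rw [hgdef, hpedef]
          field_simp
          ring
        rw [Real.norm_eq_abs, hval, abs_of_nonneg (by positivity)]
        have h1 : Real.sqrt s * (ε + Real.sqrt s)⁻¹ ≤ 1 := by
          rw [← mul_inv_cancel₀ hd.ne']
          gcongr
          linarith
        nlinarith
      exact mul_le_mul_of_nonneg_right hcfc (norm_nonneg y)
    -- main term
    have hTT : T * adjoint T = cfc (fun s => k s * s) Q := by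
      have hRsa : IsSelfAdjoint R := cfc_predicate pe P
      have hst : adjoint T = (Br * R) * adjoint A := by
        rw [hTdef, ← star_eq_adjoint, star_mul, star_mul, hRsa.star_eq, hBrsa.star_eq,
          star_eq_adjoint]
      have hRBBR : R * Br * (Br * R) = cfc k P := by
        rw [hkdef, mul_assoc, ← mul_assoc Br Br R, hBrBr]
        rw [cfc_mul (fun s => pe s * Real.sqrt s) pe P (hpe.mul Real.continuous_sqrt).continuousOn
          hpe.continuousOn,
          cfc_mul pe Real.sqrt P hpe.continuousOn Real.continuous_sqrt.continuousOn]
        rw [mul_assoc]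
      have : T * adjoint T = A * cfc k P * adjoint A := by
        rw [hTdef, hst, show A * (R * Br) * (Br * R * adjoint A)
          = A * (R * Br * (Br * R)) * adjoint A by noncomm_ring, hRBBR]
      rw [this, cfc_intertwine_s18 A k hk, mul_assoc, ← hQdef]
      nth_rewrite 2 [← cfc_id ℝ Q hQ]
      rw [← cfc_mul k id Q hk.continuousOn continuous_id.continuousOn]
      rfl
    have hTTle : T * adjoint T ≤ C := by
      rw [hTT, hCdef]
      refine cfc_mono (fun s hs => ?_) (hk.mul continuous_id).continuousOn
        Real.continuous_sqrt.continuousOn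
      have hs0 : 0 ≤ s := spectrum_nonneg_of_nonneg hQ0 hs
      have ht : 0 ≤ Real.sqrt s := Real.sqrt_nonneg s
      have hts : Real.sqrt s * Real.sqrt s = s := Real.mul_self_sqrt hs0
      have hd : 0 < ε + Real.sqrt s := by positivity
      rw [hkdef, hpedef]
      simp only
      have key : s ≤ (ε + Real.sqrt s) * (ε + Real.sqrt s) := by nlinarith
      have hinv : 0 ≤ (ε + Real.sqrt s)⁻¹ := by positivity
      calc (ε + Real.sqrt s)⁻¹ * Real.sqrt s * (ε + Real.sqrt s)⁻¹ * s
          ≤ (ε + Real.sqrt s)⁻¹ * Real.sqrt s * (ε + Real.sqrt s)⁻¹ *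
            ((ε + Real.sqrt s) * (ε + Real.sqrt s)) := by
            have : 0 ≤ (ε + Real.sqrt s)⁻¹ * Real.sqrt s * (ε + Real.sqrt s)⁻¹ := by positivity
            exact mul_le_mul_of_nonneg_left key this
        _ = Real.sqrt s * ((ε + Real.sqrt s)⁻¹ * (ε + Real.sqrt s))
            * ((ε + Real.sqrt s)⁻¹ * (ε + Real.sqrt s)) := by ring
        _ = Real.sqrt s := by rw [inv_mul_cancel₀ hd.ne']; ring
    -- assemble
    have hsplit : ⟪x, A x⟫_ℂ = ⟪x, (A - A * cfc g P) x⟫_ℂ + ⟪x, (A * cfc g P) x⟫_ℂ := by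
      rw [← inner_add_right]
      congr 1
      simp [ContinuousLinearMap.sub_apply]
    have hterm1 : ‖⟪x, (A - A * cfc g P) x⟫_ℂ‖ ≤ ε := by
      refine (norm_inner_le_norm _ _).trans ?_
      rw [hx, one_mul]
      exact ((le_opNorm _ x).trans (by rw [hx, mul_one]; exact hTail))
    have hterm2 : ‖⟪x, (A * cfc g P) x⟫_ℂ‖ ≤ (b + c) / 2 := by
      rw [hAg]
      have e3 : ⟪x, (T * Br) x⟫_ℂ = ⟪adjoint T x, Br x⟫_ℂ := by
        rw [ContinuousLinearMap.mul_apply, adjoint_inner_left]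
      rw [e3]
      refine (norm_inner_le_norm _ _).trans ?_
      have hBrx : ‖Br x‖ ^ 2 = b := by
        rw [hbdef, ← hBrBr, ← inner_self_eq_norm_sq (𝕜 := ℂ) (Br x)]
        rw [ContinuousLinearMap.mul_apply]
        nth_rewrite 2 [← hBrsa.adjoint_eq]
        rw [adjoint_inner_right, inner_re_symm]
        rfl
      have hTx : ‖adjoint T x‖ ^ 2 ≤ c := by
        have : ‖adjoint T x‖ ^ 2 = (⟪x, (T * adjoint T) x⟫_ℂ).re := by
          rw [← inner_self_eq_norm_sq (𝕜 := ℂ) (adjoint T x), ContinuousLinearMap.mul_apply,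
            adjoint_inner_left]
          rfl
        rw [this]
        exact re_inner_le_of_le hTTle x
      have hb0 : 0 ≤ b := by rw [← hBrx]; positivity
      have hc0 : 0 ≤ c := le_trans (by positivity) hTx
      have h1 : ‖adjoint T x‖ ≤ Real.sqrt c := by
        rw [← Real.sqrt_sq (norm_nonneg _)]
        exact Real.sqrt_le_sqrt hTx
      have h2 : ‖Br x‖ = Real.sqrt b := by
        rw [← Real.sqrt_sq (norm_nonneg _), hBrx]
      calc ‖adjoint T x‖ * ‖Br x‖ ≤ Real.sqrt c * Real.sqrt b := by
            rw [h2]; exact mul_le_mul_of_nonneg_right h1 (Real.sqrt_nonneg b)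
        _ ≤ (b + c) / 2 := by
            nlinarith [Real.sq_sqrt hb0, Real.sq_sqrt hc0, sq_nonneg (Real.sqrt b - Real.sqrt c),
              Real.sqrt_nonneg b, Real.sqrt_nonneg c]
    calc ‖⟪x, A x⟫_ℂ‖ ≤ ‖⟪x, (A - A * cfc g P) x⟫_ℂ‖ + ‖⟪x, (A * cfc g P) x⟫_ℂ‖ := by
          rw [hsplit]; exact norm_add_le _ _
      _ ≤ (b + c) / 2 + ε := by linarith
  exact le_of_forall_pos_le_add hbc

lemma re_inner_sq_nonneg (T : H →L[ℂ] H) (hT : IsSelfAdjoint T) (x : H) :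
    0 ≤ (⟪x, (T ^ 2) x⟫_ℂ).re := by
  have e : (⟪x, (T ^ 2) x⟫_ℂ).re = ‖T x‖ ^ 2 := by
    rw [pow_two, ContinuousLinearMap.mul_apply, ← inner_self_eq_norm_sq (𝕜 := ℂ) (T x)]
    nth_rewrite 1 [← hT.adjoint_eq]
    rw [adjoint_inner_right]
    rfl
  rw [e]
  positivity

lemma smul_one_sq_expand (T : H →L[ℂ] H) (μ : ℝ) :
    (T - μ • 1) ^ 2 = T ^ 2 - (2 * μ) • T + (μ * μ) • (1 : H →L[ℂ] H) := by
  simp only [pow_two, sub_mul, mul_sub, smul_mul_assoc, mul_smul_comm, one_mul, mul_one,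
    smul_smul]
  module

lemma re_inner_expand (T : H →L[ℂ] H) (μ : ℝ) (x : H) (hx : ‖x‖ = 1) :
    (⟪x, (((T - μ • 1) ^ 2) : H →L[ℂ] H) x⟫_ℂ).re
      = (⟪x, (T ^ 2) x⟫_ℂ).re - 2 * μ * (⟪x, T x⟫_ℂ).re + μ * μ := by
  have hxx : (⟪x, x⟫_ℂ).re = 1 := by
    have := inner_self_eq_norm_sq (𝕜 := ℂ) x
    rw [hx] at this
    simpa using this
  rw [smul_one_sq_expand]
  simp only [ContinuousLinearMap.add_apply, ContinuousLinearMap.sub_apply,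
    ContinuousLinearMap.smul_apply, ContinuousLinearMap.one_apply, inner_add_right,
    inner_sub_right, inner_smul_right_eq_smul, Complex.add_re, Complex.sub_re,
    Complex.smul_re]
  rw [hxx]
  simp only [smul_eq_mul]
  ring

end Aux

theorem numRadius_sq_le_refined {H : Type*} [NormedAddCommGroup H] [InnerProductSpace ℂ H]
    [CompleteSpace H] (A : H →L[ℂ] H)
    (m : H → ℝ) (hm : ∀ x : H, m x = (1 / 2) * (⟪x, (opAbs A + opAbs (adjoint A)) x⟫_ℂ).re)
    (ξ : H → ℝ) (hξ : ∀ x : H, ξ x =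
      (⟪x, ((((opAbs A - m x • 1) ^ 2) + ((opAbs (adjoint A) - m x • 1) ^ 2) : H →L[ℂ] H) x)⟫_ℂ).re) :
    numRadius A ^ 2 ≤
      (1 / 2) * (‖opAbs A ^ 2 + opAbs (adjoint A) ^ 2‖ -
        ⨅ x : {x : H // ‖x‖ = 1}, ξ (x : H)) := by
  set B := opAbs A with hBdef
  set C := opAbs (adjoint A) with hCdef
  have hBc : B = cfc Real.sqrt (adjoint A * A) := opAbs_eq_cfc A
  have hCc : C = cfc Real.sqrt (A * adjoint A) := by
    rw [hCdef, opAbs_eq_cfc (adjoint A), adjoint_adjoint]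
  have hBsa : IsSelfAdjoint B := by rw [hBc]; exact cfc_predicate _ _
  have hCsa : IsSelfAdjoint C := by rw [hCc]; exact cfc_predicate _ _
  -- ξ is split and expanded
  have hξ' : ∀ x : H, ‖x‖ = 1 → ξ x
      = (⟪x, (B ^ 2) x⟫_ℂ).re + (⟪x, (C ^ 2) x⟫_ℂ).re
        - 2 * m x * ((⟪x, B x⟫_ℂ).re + (⟪x, C x⟫_ℂ).re) + 2 * (m x * m x) := by
    intro x hx
    rw [hξ x, ContinuousLinearMap.add_apply, inner_add_right, Complex.add_re,
      re_inner_expand B (m x) x hx, re_inner_expand C (m x) x hx]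
    ring
  have hm' : ∀ x : H, 2 * m x = (⟪x, B x⟫_ℂ).re + (⟪x, C x⟫_ℂ).re := by
    intro x
    rw [hm x, ContinuousLinearMap.add_apply, inner_add_right, Complex.add_re]
    ring
  -- ξ x = S x - 2 (m x)^2 on the sphere
  have hxi : ∀ x : H, ‖x‖ = 1 → ξ x
      = ((⟪x, (B ^ 2) x⟫_ℂ).re + (⟪x, (C ^ 2) x⟫_ℂ).re) - 2 * (m x * m x) := by
    intro x hx
    rw [hξ' x hx, ← hm' x]
    ring
  -- nonnegativity of ξ
  have hξ0 : ∀ x : H, 0 ≤ ξ x := by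
    intro x
    rw [hξ x, ContinuousLinearMap.add_apply, inner_add_right, Complex.add_re]
    have h1 := re_inner_sq_nonneg (B - m x • 1)
      (hBsa.sub (IsSelfAdjoint.smul (star_trivial (m x)) (IsSelfAdjoint.one _))) x
    have h2 := re_inner_sq_nonneg (C - m x • 1)
      (hCsa.sub (IsSelfAdjoint.smul (star_trivial (m x)) (IsSelfAdjoint.one _))) x
    linarith
  have hbdd : BddBelow (Set.range fun x : {x : H // ‖x‖ = 1} => ξ (x : H)) :=
    ⟨0, by rintro y ⟨x, rfl⟩; exact hξ0 x⟩
  set I := ⨅ x : {x : H // ‖x‖ = 1}, ξ (x : H) with hIdef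
  set N := ‖B ^ 2 + C ^ 2‖ with hNdef
  -- pointwise bound
  have hpt : ∀ x : {x : H // ‖x‖ = 1}, ‖⟪(x : H), A x⟫_ℂ‖ ^ 2 ≤ (1 / 2) * (N - I) := by
    intro x
    obtain ⟨x, hx⟩ := x
    have hmx : ‖⟪x, A x⟫_ℂ‖ ≤ m x := by
      rw [hm x, ContinuousLinearMap.add_apply, inner_add_right, Complex.add_re]
      have := mixed_bound A x hx
      rw [← hBc, ← hCc] at this
      linarith
    have hm0 : 0 ≤ m x := le_trans (norm_nonneg _) hmx
    have hS : (⟪x, (B ^ 2) x⟫_ℂ).re + (⟪x, (C ^ 2) x⟫_ℂ).re ≤ N := by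
      have e : (⟪x, (B ^ 2) x⟫_ℂ).re + (⟪x, (C ^ 2) x⟫_ℂ).re
          = (⟪x, (B ^ 2 + C ^ 2) x⟫_ℂ).re := by
        rw [ContinuousLinearMap.add_apply, inner_add_right, Complex.add_re]
      rw [e]
      calc (⟪x, (B ^ 2 + C ^ 2) x⟫_ℂ).re ≤ ‖⟪x, (B ^ 2 + C ^ 2) x⟫_ℂ‖ :=
            Complex.re_le_norm _
        _ ≤ ‖x‖ * ‖(B ^ 2 + C ^ 2) x‖ := norm_inner_le_norm _ _
        _ ≤ ‖x‖ * (‖B ^ 2 + C ^ 2‖ * ‖x‖) := by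
            exact mul_le_mul_of_nonneg_left (le_opNorm _ x) (norm_nonneg x)
        _ = N := by rw [hx]; ring
    have hIle : I ≤ ξ x := ciInf_le hbdd ⟨x, hx⟩
    have hxieq := hxi x hx
    calc ‖⟪x, A x⟫_ℂ‖ ^ 2 ≤ m x ^ 2 := by
          exact pow_le_pow_left₀ (norm_nonneg _) hmx 2
      _ = (1 / 2) * (((⟪x, (B ^ 2) x⟫_ℂ).re + (⟪x, (C ^ 2) x⟫_ℂ).re) - ξ x) := by
          rw [hxieq]; ring
      _ ≤ (1 / 2) * (N - I) := by linarith
  -- assemble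
  rcases isEmpty_or_nonempty {x : H // ‖x‖ = 1} with hemp | hne
  · haveI := hemp
    have h1 : numRadius A = 0 := by
      rw [numRadius, Real.iSup_of_isEmpty]
    have h2 : I = 0 := by
      rw [hIdef, Real.iInf_of_isEmpty]
    rw [h1, h2]
    have hN0 : (0 : ℝ) ≤ N := norm_nonneg _
    nlinarith
  · haveI := hne
    set J := (1 / 2) * (N - I) with hJdef
    obtain ⟨x₀⟩ := hne
    have hJ0 : 0 ≤ J := le_trans (by positivity) (hpt x₀)
    have hub : ∀ x : {x : H // ‖x‖ = 1}, ‖⟪(x : H), A x⟫_ℂ‖ ≤ Real.sqrt J := by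
      intro x
      rw [← Real.sqrt_sq (norm_nonneg (⟪(x : H), A x⟫_ℂ))]
      exact Real.sqrt_le_sqrt (hpt x)
    have hbddA : BddAbove (Set.range fun x : {x : H // ‖x‖ = 1} => ‖⟪(x : H), A x⟫_ℂ‖) :=
      ⟨Real.sqrt J, by rintro y ⟨x, rfl⟩; exact hub x⟩
    have h0 : 0 ≤ numRadius A :=
      le_trans (norm_nonneg _) (le_ciSup hbddA x₀)
    have hsup : numRadius A ≤ Real.sqrt J := ciSup_le hub
    have := pow_le_pow_left₀ h0 hsup 2
    rw [Real.sq_sqrt hJ0] at this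
    exact this
end
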